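/- arXiv:0802.1952 — 8 statements merged into one kernel-verified Lean document; each statement's English description precedes it below -/
import Mathlib

section
/- Let B be a commutative ring and let M be a free B-module. Then for every family (I_i)_{i ∈ ι} of ideals of B, one has (⋂_{i ∈ ι} I_i) • M = ⋂_{i ∈ ι} (I_i • M); that is, (⨅ i, I_i) • (⊤ : Submodule B M) = ⨅ i, (I_i • (⊤ : Submodule B M)). -/
/-! In a basis, `x ∈ I • ⊤` exactly when every coordinate of `x` lies in `I`, and a coordinatewise
membership condition visibly commutes with intersections of ideals. -/

theorem Module.Basis.mem_ideal_smul_top_iff {R M κ : Type*} [CommSemiring R] [AddCommMonoid M]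
    [Module R M] (b : Module.Basis κ R M) (I : Ideal R) (x : M) :
    x ∈ I • (⊤ : Submodule R M) ↔ ∀ k, b.repr x k ∈ I := by
  rw [← b.span_eq, Submodule.mem_ideal_smul_span_iff_exists_sum]
  constructor
  · rintro ⟨a, ha, rfl⟩
    rwa [← Finsupp.linearCombination_apply, b.repr_linearCombination]
  · exact fun h => ⟨b.repr x, h, by rw [← Finsupp.linearCombination_apply, b.linearCombination_repr]⟩

/-- If `M` is a free module over a commutative ring `B`, then extension of
ideals to submodules of `M` commutes with arbitrary intersections:
`(⨅ i, I i) • ⊤ = ⨅ i, (I i • ⊤)`. -/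
theorem iInf_smul_top_of_free
    (B M : Type*) [CommRing B] [AddCommGroup M] [Module B M] [Module.Free B M]
    {ι : Type*} (I : ι → Ideal B) :
    (⨅ i, I i) • (⊤ : Submodule B M) = ⨅ i, (I i • (⊤ : Submodule B M)) := by
  let b := Module.Free.chooseBasis B M
  ext x
  simp only [Submodule.mem_iInf, b.mem_ideal_smul_top_iff]
  exact forall_comm
end

section
/- Let K be an algebraically closed field of characteristic zero and let n, k be positive integers with n ≥ 2k. Let R = K[x_{ia}, y_{ia} : i ∈ Fin n, a ∈ Fin k] be the polynomial ring in 2nk variables (the multivariate polynomial ring over the index type (Fin n × Fin k) ⊕ (Fin n × Fin k)). For a, b ∈ Fin k set f_{ab} = Σ_{i ∈ Fin n} x_{ia}·y_{ib}, and let B = Algebra.adjoin K {f_{ab} : a, b ∈ Fin k} be the K-subalgebra of R generated by these k² elements. Then R is a free B-module. -/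
/-!
Weight the variables so that, for every pair `(a, b)`, a single term `x_{ra} y_{rb}` of `f_{ab}`
has strictly largest weight, where `r = b - a` if `a ≤ b` and `r = k + (a - b)` otherwise; the
stable range `n ≥ 2k` provides these rows. The `2k²` variables of these leading monomials are
pairwise distinct, so the products `f^c x^e`, with `x^e` divisible by no leading monomial, have
pairwise distinct leading exponents and are linearly independent over `K`, and reducing by the
`f_{ab}` shows that they span. Hence these monomials `x^e` form a basis over `K[f_{ab}]`.
-/

open MvPolynomial Finsupp

namespace MvPolynomial

variable {σ R : Type*}

section CommSemiring

variable [CommSemiring R] (w : σ → ℕ)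

def IsWeightLeading (p : MvPolynomial σ R) (d : σ →₀ ℕ) : Prop :=
  ∃ q : MvPolynomial σ R, p = monomial d 1 + q ∧ ∀ e ∈ q.support, weight w e < weight w d

variable {w}

lemma isWeightLeading_monomial (d : σ →₀ ℕ) : IsWeightLeading w (monomial d (1 : R)) d :=
  ⟨0, (add_zero _).symm, by simp⟩

lemma weight_lt_of_mem_support_mul {p q : MvPolynomial σ R} {a b : ℕ}
    (hp : ∀ e ∈ p.support, weight w e ≤ a) (hq : ∀ e ∈ q.support, weight w e < b) :
    ∀ e ∈ (p * q).support, weight w e < a + b := by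
  classical
  intro e he
  obtain ⟨x, hx, y, hy, rfl⟩ := Finset.mem_add.mp (support_mul p q he)
  rw [map_add]
  exact add_lt_add_of_le_of_lt (hp x hx) (hq y hy)

lemma weight_le_of_mem_support_monomial {d e : σ →₀ ℕ}
    (he : e ∈ (monomial d (1 : R)).support) : weight w e ≤ weight w d := by
  classical
  rw [Finset.mem_singleton.mp (support_monomial_subset he)]

lemma IsWeightLeading.mul {p p' : MvPolynomial σ R} {d d' : σ →₀ ℕ}
    (h : IsWeightLeading w p d) (h' : IsWeightLeading w p' d') :
    IsWeightLeading w (p * p') (d + d') := by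
  classical
  obtain ⟨q, rfl, hq⟩ := h
  obtain ⟨q', rfl, hq'⟩ := h'
  have hM : monomial (d + d') (1 : R) = monomial d 1 * monomial d' 1 := by
    rw [monomial_mul, one_mul]
  refine ⟨monomial d 1 * q' + monomial d' 1 * q + q * q', by rw [hM]; ring, fun e he => ?_⟩
  rw [map_add]
  rcases Finset.mem_union.mp (support_add he) with he | he
  · rcases Finset.mem_union.mp (support_add he) with he | he
    · exact weight_lt_of_mem_support_mul (fun _ => weight_le_of_mem_support_monomial) hq' e he
    · rw [add_comm]
      exact weight_lt_of_mem_support_mul (fun _ => weight_le_of_mem_support_monomial) hq e he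
  · exact weight_lt_of_mem_support_mul (fun x hx => (hq x hx).le) hq' e he

lemma IsWeightLeading.pow {p : MvPolynomial σ R} {d : σ →₀ ℕ} (h : IsWeightLeading w p d)
    (m : ℕ) : IsWeightLeading w (p ^ m) (m • d) := by
  induction m with
  | zero => simpa using isWeightLeading_monomial (R := R) (w := w) 0
  | succ m ih => simpa [pow_succ, succ_nsmul] using ih.mul h

lemma IsWeightLeading.coeff_self {p : MvPolynomial σ R} {d : σ →₀ ℕ}
    (h : IsWeightLeading w p d) : coeff d p = 1 := by
  classical
  obtain ⟨q, rfl, hq⟩ := h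
  have : coeff d q = 0 := notMem_support_iff.mp fun hd => (hq d hd).false
  simp [this]

lemma IsWeightLeading.coeff_eq_zero {p : MvPolynomial σ R} {d e : σ →₀ ℕ}
    (h : IsWeightLeading w p d) (hne : e ≠ d) (hw : weight w d ≤ weight w e) :
    coeff e p = 0 := by
  classical
  obtain ⟨q, rfl, hq⟩ := h
  have : coeff e q = 0 := notMem_support_iff.mp fun he => (hq e he).not_ge hw
  simp [coeff_monomial, hne.symm, this]

lemma isWeightLeading_sum_monomial {ι : Type*} [Fintype ι] (d : ι → σ →₀ ℕ) (i₀ : ι)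
    (h : ∀ i ≠ i₀, weight w (d i) < weight w (d i₀)) :
    IsWeightLeading w (∑ i, monomial (d i) (1 : R)) (d i₀) := by
  classical
  refine ⟨∑ i ∈ Finset.univ.erase i₀, monomial (d i) 1,
    (Finset.add_sum_erase _ _ (Finset.mem_univ i₀)).symm, fun e he => ?_⟩
  obtain ⟨i, hi, he⟩ := Finset.mem_biUnion.mp (support_sum he)
  rw [Finset.mem_singleton.mp (support_monomial_subset he)]
  exact h i (Finset.ne_of_mem_erase hi)

end CommSemiring

theorem linearIndependent_of_isWeightLeading [CommRing R] {w : σ → ℕ} {ι : Type*}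
    {p : ι → MvPolynomial σ R} {d : ι → σ →₀ ℕ} (hd : Function.Injective d)
    (hp : ∀ i, IsWeightLeading w (p i) (d i)) : LinearIndependent R p := by
  classical
  rw [linearIndependent_iff']
  intro s g hsum
  by_contra! hne
  obtain ⟨i₀, hi₀, hmax⟩ := Finset.exists_max_image (s.filter fun i => g i ≠ 0)
    (fun i => weight w (d i)) (by simpa [Finset.Nonempty] using hne)
  have hcoeff := congrArg (coeff (d i₀)) hsum
  rw [coeff_sum, coeff_zero, Finset.sum_eq_single i₀] at hcoeff
  · rw [coeff_smul, (hp i₀).coeff_self, smul_eq_mul, mul_one] at hcoeff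
    exact (Finset.mem_filter.mp hi₀).2 hcoeff
  · intro i hi hii₀
    by_cases hgi : g i = 0
    · rw [hgi, zero_smul, coeff_zero]
    · rw [coeff_smul, (hp i).coeff_eq_zero (hd.ne hii₀).symm
        (hmax i (Finset.mem_filter.mpr ⟨hi, hgi⟩)), smul_zero]
  · exact fun h => absurd (Finset.mem_filter.mp hi₀).1 h

lemma mem_of_forall_monomial_mem [CommSemiring R] {S : Submodule R (MvPolynomial σ R)}
    {p : MvPolynomial σ R} (h : ∀ e ∈ p.support, monomial e 1 ∈ S) : p ∈ S := by
  rw [p.as_sum]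
  refine S.sum_mem fun e he => ?_
  simpa [smul_monomial] using S.smul_mem (coeff e p) (h e he)

section Standard

variable {ι : Type*} (u v : ι → σ)

def IsStandardExponent (e : σ →₀ ℕ) : Prop :=
  ∀ i, e (u i) = 0 ∨ e (v i) = 0

variable {u v}

lemma single_add_single_le {a b : σ} (hab : a ≠ b) {d : σ →₀ ℕ} (ha : d a ≠ 0) (hb : d b ≠ 0) :
    single a 1 + single b 1 ≤ d := by
  classical
  intro x
  simp only [Finsupp.add_apply, Finsupp.single_apply]
  split_ifs <;> subst_vars <;> first | omega | exact absurd rfl hab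

lemma mapDomain_add_mapDomain_apply_left (hu : Function.Injective u) (huv : ∀ i j, u i ≠ v j)
    (c : ι →₀ ℕ) (i : ι) : (mapDomain u c + mapDomain v c) (u i) = c i := by
  rw [Finsupp.add_apply, mapDomain_apply hu,
    mapDomain_of_notMem_range _ _ fun ⟨j, hj⟩ => huv i j hj.symm, add_zero]

lemma mapDomain_add_mapDomain_apply_right (hv : Function.Injective v) (huv : ∀ i j, u i ≠ v j)
    (c : ι →₀ ℕ) (i : ι) : (mapDomain u c + mapDomain v c) (v i) = c i := by
  rw [Finsupp.add_apply, mapDomain_apply hv,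
    mapDomain_of_notMem_range _ _ fun ⟨j, hj⟩ => huv j i hj, zero_add]

/-- `c i` is recovered as the smaller of the entries at `u i` and `v i`, since a standard `e`
vanishes at one of them. -/
lemma eq_of_mapDomain_add_mapDomain_add_eq (hu : Function.Injective u)
    (hv : Function.Injective v) (huv : ∀ i j, u i ≠ v j)
    {c c' : ι →₀ ℕ} {e e' : σ →₀ ℕ} (he : IsStandardExponent u v e)
    (he' : IsStandardExponent u v e')
    (h : mapDomain u c + mapDomain v c + e = mapDomain u c' + mapDomain v c' + e') :
    c = c' ∧ e = e' := by
  have hc : c = c' := by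
    ext i
    have hui := DFunLike.congr_fun h (u i)
    have hvi := DFunLike.congr_fun h (v i)
    simp only [Finsupp.add_apply (mapDomain u _ + _), mapDomain_add_mapDomain_apply_left hu huv,
      mapDomain_add_mapDomain_apply_right hv huv] at hui hvi
    rcases he i with h₁ | h₁ <;> rcases he' i with h₂ | h₂ <;> omega
  subst hc
  exact ⟨rfl, add_left_cancel h⟩

section CommSemiring

variable [CommSemiring R] {w : σ → ℕ}

lemma isWeightLeading_aeval_monomial {f : ι → MvPolynomial σ R}
    (hf : ∀ i, IsWeightLeading w (f i) (single (u i) 1 + single (v i) 1)) (c : ι →₀ ℕ) :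
    IsWeightLeading w (aeval f (monomial c (1 : R))) (mapDomain u c + mapDomain v c) := by
  induction c using Finsupp.induction_linear with
  | zero => simpa using isWeightLeading_monomial (R := R) (w := w) 0
  | add c c' hc hc' =>
    rw [← one_mul (1 : R), ← monomial_mul, map_mul, mapDomain_add, mapDomain_add,
      add_add_add_comm]
    exact hc.mul hc'
  | single i m =>
    rw [← X_pow_eq_monomial, map_pow, aeval_X, mapDomain_single, mapDomain_single]
    simpa [smul_add] using (hf i).pow m

variable (u v) (f : ι → MvPolynomial σ R)

noncomputable def standardProduct (x : (ι →₀ ℕ) × {e // IsStandardExponent u v e}) :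
    MvPolynomial σ R :=
  aeval f (monomial x.1 (1 : R)) * monomial x.2.1 1

variable {u v f}

lemma mul_mem_span_standardProduct (i : ι) {p : MvPolynomial σ R}
    (hp : p ∈ Submodule.span R (Set.range (standardProduct u v f))) :
    f i * p ∈ Submodule.span R (Set.range (standardProduct u v f)) := by
  induction hp using Submodule.span_induction with
  | mem _ hx =>
    obtain ⟨⟨c, e⟩, rfl⟩ := hx
    refine Submodule.subset_span ⟨(single i 1 + c, e), ?_⟩
    rw [standardProduct, standardProduct, monomial_single_add, pow_one, map_mul, aeval_X,
      mul_assoc]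
  | zero => simp
  | add _ _ _ _ hx hy => simpa [mul_add] using Submodule.add_mem _ hx hy
  | smul a _ _ hx => simpa [mul_smul_comm] using Submodule.smul_mem _ a hx

end CommSemiring

section CommRing

variable [CommRing R] {w : σ → ℕ} {f : ι → MvPolynomial σ R}

theorem linearIndependent_standardProduct
    (hf : ∀ i, IsWeightLeading w (f i) (single (u i) 1 + single (v i) 1))
    (hu : Function.Injective u) (hv : Function.Injective v) (huv : ∀ i j, u i ≠ v j) :
    LinearIndependent R (standardProduct u v f) := by
  have hlead : ∀ x : (ι →₀ ℕ) × {e // IsStandardExponent u v e}, IsWeightLeading w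
      (standardProduct u v f x) (mapDomain u x.1 + mapDomain v x.1 + x.2.1) := by
    intro x
    rw [standardProduct]
    exact (isWeightLeading_aeval_monomial hf x.1).mul (isWeightLeading_monomial _)
  refine linearIndependent_of_isWeightLeading (fun x y h => ?_) hlead
  obtain ⟨h₁, h₂⟩ := eq_of_mapDomain_add_mapDomain_add_eq hu hv huv x.2.2 y.2.2 h
  exact Prod.ext h₁ (Subtype.ext h₂)

/-- Induction on the weight and then the degree: reducing by the leading monomial of `f i`
lowers one of them. -/
lemma monomial_mem_span_standardProduct
    (hf : ∀ i, IsWeightLeading w (f i) (single (u i) 1 + single (v i) 1))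
    (huv : ∀ i, u i ≠ v i) (d : σ →₀ ℕ) :
    monomial d 1 ∈ Submodule.span R (Set.range (standardProduct u v f)) := by
  classical
  have hwf : WellFounded fun d d' : σ →₀ ℕ =>
      toLex (weight w d, degree d) < toLex (weight w d', degree d') :=
    InvImage.wf _ wellFounded_lt
  induction d using hwf.induction with | _ d ih =>
  by_cases hd : IsStandardExponent u v d
  · exact Submodule.subset_span ⟨(0, ⟨d, hd⟩), by simp [standardProduct]⟩
  obtain ⟨i, hui, hvi⟩ : ∃ i, d (u i) ≠ 0 ∧ d (v i) ≠ 0 := by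
    simpa [IsStandardExponent, not_or] using hd
  obtain ⟨q, hfq, hq⟩ := hf i
  obtain ⟨d', rfl⟩ := exists_add_of_le (single_add_single_le (huv i) hui hvi)
  have hreduce : monomial (single (u i) 1 + single (v i) 1 + d') (1 : R) =
      f i * monomial d' 1 - monomial d' 1 * q := by
    rw [hfq, add_mul, monomial_mul, one_mul]
    ring
  rw [hreduce]
  refine sub_mem (mul_mem_span_standardProduct i (ih d' ?_))
    (mem_of_forall_monomial_mem fun e he => ih e ?_)
  · simp [Prod.Lex.toLex_lt_toLex']
  · have := weight_lt_of_mem_support_mul (fun _ => weight_le_of_mem_support_monomial) hq e he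
    simp only [Prod.Lex.toLex_lt_toLex, map_add] at this ⊢
    omega

theorem span_standardProduct_eq_top
    (hf : ∀ i, IsWeightLeading w (f i) (single (u i) 1 + single (v i) 1))
    (huv : ∀ i, u i ≠ v i) :
    Submodule.span R (Set.range (standardProduct u v f)) = ⊤ :=
  eq_top_iff.mpr fun _ _ => mem_of_forall_monomial_mem fun d _ =>
    monomial_mem_span_standardProduct hf huv d

lemma aeval_eq_sum_smul_aeval_monomial (p : MvPolynomial ι R) {T : Finset (ι →₀ ℕ)}
    (hT : p.support ⊆ T) : aeval f p = ∑ c ∈ T, coeff c p • aeval f (monomial c (1 : R)) := by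
  conv_lhs => rw [p.as_sum]
  rw [map_sum, Finset.sum_subset hT fun c _ hc => by simp [notMem_support_iff.mp hc]]
  refine Finset.sum_congr rfl fun c _ => ?_
  rw [← map_smul, smul_monomial, smul_eq_mul, mul_one]

theorem linearIndependent_adjoin_standardMonomial
    (hf : ∀ i, IsWeightLeading w (f i) (single (u i) 1 + single (v i) 1))
    (hu : Function.Injective u) (hv : Function.Injective v) (huv : ∀ i j, u i ≠ v j) :
    LinearIndependent (Algebra.adjoin R (Set.range f))
      fun e : {e // IsStandardExponent u v e} => monomial e.1 (1 : R) := by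
  classical
  rw [linearIndependent_iff']
  intro s g hg e he
  have hQ : ∀ e, ∃ Q : MvPolynomial ι R, aeval f Q = g e := fun e => by
    simpa [Algebra.adjoin_range_eq_range_aeval] using (g e).2
  choose Q hQ using hQ
  set T := s.biUnion fun e => (Q e).support
  have hg_eq : ∀ e ∈ s, (g e : MvPolynomial σ R) =
      ∑ c ∈ T, coeff c (Q e) • aeval f (monomial c (1 : R)) := fun e he => by
    rw [← hQ, aeval_eq_sum_smul_aeval_monomial _
      (Finset.subset_biUnion_of_mem (fun e => (Q e).support) he)]
  have hsum : ∑ x ∈ T ×ˢ s, coeff x.1 (Q x.2) • standardProduct u v f x = 0 := by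
    rw [Finset.sum_product_right, ← hg]
    refine Finset.sum_congr rfl fun e he => ?_
    simp only [Subalgebra.smul_def, smul_eq_mul, hg_eq e he, Finset.sum_mul, standardProduct,
      smul_mul_assoc]
  have hcoeff := linearIndependent_iff'.mp (linearIndependent_standardProduct hf hu hv huv) _ _ hsum
  ext1
  rw [hg_eq e he, ZeroMemClass.coe_zero]
  exact Finset.sum_eq_zero fun c hc => by rw [hcoeff (c, e) (Finset.mem_product.mpr ⟨hc, he⟩),
    zero_smul]

noncomputable def standardMonomialBasis
    (hf : ∀ i, IsWeightLeading w (f i) (single (u i) 1 + single (v i) 1))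
    (hu : Function.Injective u) (hv : Function.Injective v) (huv : ∀ i j, u i ≠ v j) :
    Module.Basis {e // IsStandardExponent u v e} (Algebra.adjoin R (Set.range f))
      (MvPolynomial σ R) :=
  Module.Basis.mk (linearIndependent_adjoin_standardMonomial hf hu hv huv) <| by
    rw [top_le_iff, ← Submodule.restrictScalars_eq_top_iff R, eq_top_iff,
      ← span_standardProduct_eq_top hf fun i => huv i i, Submodule.span_le]
    rintro _ ⟨⟨c, e⟩, rfl⟩
    exact Submodule.smul_mem _ (⟨_, Algebra.adjoin_range_eq_range_aeval R f ▸ ⟨_, rfl⟩⟩ :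
      Algebra.adjoin R (Set.range f)) (Submodule.subset_span ⟨e, rfl⟩)

theorem free_adjoin_of_isWeightLeading
    (hf : ∀ i, IsWeightLeading w (f i) (single (u i) 1 + single (v i) 1))
    (hu : Function.Injective u) (hv : Function.Injective v) (huv : ∀ i j, u i ≠ v j) :
    Module.Free (Algebra.adjoin R (Set.range f)) (MvPolynomial σ R) :=
  .of_basis (standardMonomialBasis hf hu hv huv)

end CommRing

end Standard

end MvPolynomial

namespace GLMomentMap

def xWeight (k i a : ℤ) : ℤ :=
  if i < k then 1 - i ^ 2 - 2 * i * a else if i < 2 * k then -2 * (i - k) ^ 2 + 4 * (i - k) * a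
  else 0

def yWeight (k i b : ℤ) : ℤ :=
  if i < k then 2 * i * b else if i < 2 * k then -4 * (i - k) * b else 0

def pairRow (k a b : ℤ) : ℤ := if a ≤ b then b - a else k + (a - b)

/-- On the rows `i < k` the sum is `1 + (b - a)² - (i - (b - a))²`, on the rows `i = k + t < 2k`
it is `2 (a - b)² - 2 (t - (a - b))²`, and `0` on the remaining rows. -/
lemma xWeight_add_yWeight_lt {k a b i : ℤ} (ha : 0 ≤ a) (hak : a < k) (hb : 0 ≤ b) (hbk : b < k)
    (hi : 0 ≤ i) (hne : i ≠ pairRow k a b) :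
    xWeight k i a + yWeight k i b <
      xWeight k (pairRow k a b) a + yWeight k (pairRow k a b) b := by
  have hsq : 1 ≤ (i - pairRow k a b) ^ 2 := by
    rcases lt_or_gt_of_ne hne with h | h <;> nlinarith
  unfold pairRow at hsq ⊢
  unfold xWeight yWeight
  split_ifs at hsq ⊢ <;> first | omega | nlinarith

lemma xWeight_nonneg {k i a : ℤ} (ha : 0 ≤ a) (hak : a < k) (hi : 0 ≤ i) :
    0 ≤ 4 * k ^ 2 + xWeight k i a := by
  unfold xWeight
  split_ifs <;> nlinarith

lemma yWeight_nonneg {k i b : ℤ} (hb : 0 ≤ b) (hbk : b < k) (hi : 0 ≤ i) :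
    0 ≤ 4 * k ^ 2 + yWeight k i b := by
  unfold yWeight
  split_ifs <;> nlinarith

variable {n k : ℕ}

/-- The shift by `4 k²` makes the weights nonnegative and adds the same constant to the weight of
every monomial `x_{ia} y_{ib}`. -/
def momentWeight : (Fin n × Fin k) ⊕ (Fin n × Fin k) → ℕ
  | .inl (i, a) => (4 * k ^ 2 + xWeight k i a).toNat
  | .inr (i, b) => (4 * k ^ 2 + yWeight k i b).toNat

lemma weight_pairExponent (i : Fin n) (a b : Fin k) :
    (weight momentWeight (single (.inl (i, a)) 1 + single (.inr (i, b)) 1) : ℤ) =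
      8 * k ^ 2 + xWeight k i a + yWeight k i b := by
  have hi : (0 : ℤ) ≤ i := i.val.cast_nonneg
  rw [map_add, weight_single, weight_single, one_smul, one_smul, Nat.cast_add, momentWeight,
    momentWeight, Int.toNat_of_nonneg (xWeight_nonneg a.val.cast_nonneg (by simp) hi),
    Int.toNat_of_nonneg (yWeight_nonneg b.val.cast_nonneg (by simp) hi)]
  ring

def momentRow (hk : 2 * k ≤ n) (a b : Fin k) : Fin n :=
  ⟨if a ≤ b then b - a else k + (a - b), by split_ifs <;> omega⟩

lemma momentRow_cast (hk : 2 * k ≤ n) (a b : Fin k) :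
    ((momentRow hk a b : ℕ) : ℤ) = pairRow k a b := by
  simp only [momentRow, pairRow, Fin.le_iff_val_le_val]
  split_ifs <;> omega

lemma injective_momentRow_fst (hk : 2 * k ≤ n) :
    Function.Injective fun ab : Fin k × Fin k => (momentRow hk ab.1 ab.2, ab.1) := by
  rintro ⟨a, b⟩ ⟨a', b'⟩ h
  obtain ⟨hrow, rfl⟩ := Prod.mk.inj h
  have hcast := congrArg (fun i : Fin n => (i : ℤ)) hrow
  simp only [momentRow_cast, pairRow] at hcast
  congr 1
  ext
  split_ifs at hcast <;> omega

lemma injective_momentRow_snd (hk : 2 * k ≤ n) :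
    Function.Injective fun ab : Fin k × Fin k => (momentRow hk ab.1 ab.2, ab.2) := by
  rintro ⟨a, b⟩ ⟨a', b'⟩ h
  obtain ⟨hrow, rfl⟩ := Prod.mk.inj h
  have hcast := congrArg (fun i : Fin n => (i : ℤ)) hrow
  simp only [momentRow_cast, pairRow] at hcast
  congr 1
  ext
  split_ifs at hcast <;> omega

lemma isWeightLeading_momentMap {R : Type*} [CommSemiring R] (hk : 2 * k ≤ n) (a b : Fin k) :
    IsWeightLeading momentWeight
      (∑ i : Fin n, X (.inl (i, a)) * X (.inr (i, b)) : MvPolynomial _ R)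
      (single (.inl (momentRow hk a b, a)) 1 + single (.inr (momentRow hk a b, b)) 1) := by
  simp only [X, monomial_mul, one_mul]
  refine isWeightLeading_sum_monomial _ _ fun i hi => ?_
  have hne : (i : ℤ) ≠ pairRow k a b := by
    rw [← momentRow_cast hk]
    exact fun h => hi (Fin.ext (by exact_mod_cast h))
  zify
  rw [weight_pairExponent, weight_pairExponent, momentRow_cast]
  linarith [xWeight_add_yWeight_lt a.val.cast_nonneg (by simp) b.val.cast_nonneg (by simp)
    i.val.cast_nonneg hne]

end GLMomentMap

open GLMomentMap in
theorem free_over_moment_map_subalgebra_gl_general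
    (K : Type*) [Field K]
    (n k : ℕ) (hstable : 2 * k ≤ n) :
    Module.Free
      (Algebra.adjoin K
        {p : MvPolynomial ((Fin n × Fin k) ⊕ (Fin n × Fin k)) K |
          ∃ a b : Fin k, p = ∑ i : Fin n, X (Sum.inl (i, a)) * X (Sum.inr (i, b))})
      (MvPolynomial ((Fin n × Fin k) ⊕ (Fin n × Fin k)) K) := by
  let f (ab : Fin k × Fin k) : MvPolynomial ((Fin n × Fin k) ⊕ (Fin n × Fin k)) K :=
    ∑ i : Fin n, X (.inl (i, ab.1)) * X (.inr (i, ab.2))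
  have hgen : {p | ∃ a b : Fin k, p = ∑ i : Fin n, X (Sum.inl (i, a)) * X (Sum.inr (i, b))} =
      Set.range f := by
    ext p
    simp [f, eq_comm]
  rw [hgen]
  exact (free_adjoin_of_isWeightLeading (f := f)
    (fun ab => isWeightLeading_momentMap hstable ab.1 ab.2)
    (Sum.inl_injective.comp (injective_momentRow_fst hstable))
    (Sum.inr_injective.comp (injective_momentRow_snd hstable)) fun _ _ => Sum.inl_ne_inr :)

/-- For the dual pair `(gl_n, gl_k)` in the stable range `n ≥ 2k`, the
polynomial ring `R = K[x_{ia}, y_{ia}]` is a free module over the subalgebra generated by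
the moment map components `f_{ab} = Σ_i x_{ia} y_{ib}`. -/
theorem free_over_moment_map_subalgebra_gl
    (K : Type*) [Field K] [IsAlgClosed K] [CharZero K]
    (n k : ℕ) (hn : 0 < n) (hk : 0 < k) (hstable : 2 * k ≤ n) :
    Module.Free
      (Algebra.adjoin K
        {p : MvPolynomial ((Fin n × Fin k) ⊕ (Fin n × Fin k)) K |
          ∃ a b : Fin k, p = ∑ i : Fin n, X (Sum.inl (i, a)) * X (Sum.inr (i, b))})
      (MvPolynomial ((Fin n × Fin k) ⊕ (Fin n × Fin k)) K) :=
  free_over_moment_map_subalgebra_gl_general K n k hstable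
end

section
/- Let K be an algebraically closed field of characteristic zero and let N, k be positive integers with N ≥ 4k. Let R = K[z_{ia} : i ∈ Fin N, a ∈ Fin (2k)] be the polynomial ring in 2Nk variables. For a, b ∈ Fin (2k) set g_{ab} = Σ_{i ∈ Fin N} z_{ia}·z_{ib}, and let B = Algebra.adjoin K {g_{ab} : a, b ∈ Fin (2k)} be the K-subalgebra of R generated by these elements. Then R is a free B-module. -/
/-!
Give the variable `z_{ia}` the weight `4ai + N² - i²`. The monomial of largest weight in
`g_{ab}` is then `z_{a+b,a} z_{a+b,b}` (this needs `a + b < N`), with coefficient `1`, and the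
leading monomials of distinct pairs `{a, b}` involve disjoint sets of variables. Hence every
monomial is uniquely a product of leading monomials times a standard monomial `μ` (one divisible by
no leading monomial), and by triangularity with respect to the weight the products
`∏ g_p ^ e_p * μ` form a `K`-basis of `R`. As the `∏ g_p ^ e_p` span `B` over `K`, the standard
monomials form a `B`-basis of `R`.
-/

open MvPolynomial Finsupp Function

namespace MvPolynomial

variable {R σ : Type*} [CommRing R] (w : σ → ℕ)

def IsWeightedLeadingMonomial (f : MvPolynomial σ R) (s : σ →₀ ℕ) : Prop :=
  coeff s f = 1 ∧ ∀ ν ∈ f.support, ν ≠ s → weight w ν < weight w s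

namespace IsWeightedLeadingMonomial

variable {w} {f g : MvPolynomial σ R} {s t : σ →₀ ℕ}

theorem weight_le (hf : IsWeightedLeadingMonomial w f s) {ν : σ →₀ ℕ} (hν : ν ∈ f.support) :
    weight w ν ≤ weight w s := by
  rcases eq_or_ne ν s with rfl | hne
  · exact le_rfl
  · exact (hf.2 ν hν hne).le

theorem coeff_eq_zero_of_weight_le (hf : IsWeightedLeadingMonomial w f s) {ν : σ →₀ ℕ}
    (hν : ν ≠ s) (hle : weight w s ≤ weight w ν) : coeff ν f = 0 :=
  notMem_support_iff.mp fun hmem => (hf.2 ν hmem hν).not_ge hle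

theorem monomial_one (s : σ →₀ ℕ) : IsWeightedLeadingMonomial w (monomial s (1 : R)) s := by
  classical
  refine ⟨by simp [coeff_monomial], fun ν hν hne => absurd ?_ hne⟩
  simpa using support_monomial_subset hν

theorem weight_add_lt (hf : IsWeightedLeadingMonomial w f s) (hg : IsWeightedLeadingMonomial w g t)
    {x y : σ →₀ ℕ} (hx : x ∈ f.support) (hy : y ∈ g.support) (hne : (x, y) ≠ (s, t)) :
    weight w (x + y) < weight w (s + t) := by
  have hxs := hf.weight_le hx
  have hyt := hg.weight_le hy
  rw [map_add, map_add]
  by_cases hxs' : x = s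
  · have := hg.2 y hy fun hyt' => hne (by rw [hxs', hyt'])
    omega
  · have := hf.2 x hx hxs'
    omega

theorem mul (hf : IsWeightedLeadingMonomial w f s) (hg : IsWeightedLeadingMonomial w g t) :
    IsWeightedLeadingMonomial w (f * g) (s + t) := by
  classical
  refine ⟨?_, fun ν hν hne => ?_⟩
  · rw [coeff_mul, Finset.sum_eq_single (s, t), hf.1, hg.1, one_mul]
    · rintro ⟨x, y⟩ hxy hne
      rw [Finset.HasAntidiagonal.mem_antidiagonal] at hxy
      by_contra hxy0
      have hx : x ∈ f.support := mem_support_iff.mpr (left_ne_zero_of_mul hxy0)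
      have hy : y ∈ g.support := mem_support_iff.mpr (right_ne_zero_of_mul hxy0)
      exact (hf.weight_add_lt hg hx hy hne).ne (by rw [hxy])
    · exact fun h => (h (by simp)).elim
  · obtain ⟨x, hx, y, hy, rfl⟩ := Finset.mem_add.mp (support_mul f g hν)
    exact hf.weight_add_lt hg hx hy fun h => hne (by simp_all)

theorem pow (hf : IsWeightedLeadingMonomial w f s) (n : ℕ) :
    IsWeightedLeadingMonomial w (f ^ n) (n • s) := by
  induction n with
  | zero => simpa using monomial_one (R := R) (w := w) 0
  | succ n ih => simpa [pow_succ, succ_nsmul] using ih.mul hf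

theorem prod {ι : Type*} (S : Finset ι) {f : ι → MvPolynomial σ R} {t : ι → σ →₀ ℕ}
    (hf : ∀ i ∈ S, IsWeightedLeadingMonomial w (f i) (t i)) :
    IsWeightedLeadingMonomial w (∏ i ∈ S, f i) (∑ i ∈ S, t i) := by
  classical
  induction S using Finset.induction_on with
  | empty => simpa using monomial_one (R := R) (w := w) 0
  | insert i S hi ih =>
    rw [Finset.prod_insert hi, Finset.sum_insert hi]
    exact (hf i (S.mem_insert_self i)).mul (ih fun j hj => hf j (Finset.mem_insert_of_mem hj))

theorem aeval_monomial {P : Type*} {g : P → MvPolynomial σ R} {s : P → σ →₀ ℕ}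
    (hg : ∀ p, IsWeightedLeadingMonomial w (g p) (s p)) (e : P →₀ ℕ) :
    IsWeightedLeadingMonomial w (aeval g (monomial e (1 : R))) (linearCombination ℕ s e) := by
  rw [MvPolynomial.aeval_monomial, map_one, one_mul, linearCombination_apply]
  exact prod _ fun p _ => (hg p).pow (e p)

theorem sum_monomial_one {ι : Type*} {S : Finset ι} {t : ι → σ →₀ ℕ} {i₀ : ι} (hi₀ : i₀ ∈ S)
    (hlt : ∀ i ∈ S, i ≠ i₀ → weight w (t i) < weight w (t i₀)) :
    IsWeightedLeadingMonomial w (∑ i ∈ S, monomial (t i) (1 : R)) (t i₀) := by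
  classical
  refine ⟨?_, fun ν hν hne => ?_⟩
  · rw [coeff_sum, Finset.sum_eq_single i₀ (fun i hi hne => ?_) (fun h => absurd hi₀ h),
      coeff_monomial, if_pos rfl]
    rw [coeff_monomial, if_neg fun h => (hlt i hi hne).ne (by rw [h])]
  · obtain ⟨i, hi, hν⟩ := Finset.mem_biUnion.mp (support_sum hν)
    obtain rfl := Finset.mem_singleton.mp (support_monomial_subset hν)
    exact hlt i hi fun h => hne (by rw [h])

end IsWeightedLeadingMonomial

theorem mem_of_monomial_one_mem {M : Submodule R (MvPolynomial σ R)} {f : MvPolynomial σ R}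
    (hf : ∀ ν ∈ f.support, monomial ν (1 : R) ∈ M) : f ∈ M := by
  rw [f.as_sum]
  refine M.sum_mem fun ν hν => ?_
  simpa [smul_monomial] using M.smul_mem (coeff ν f) (hf ν hν)

variable {w} {ι : Type*} {f : ι → MvPolynomial σ R} {t : ι → σ →₀ ℕ}

theorem linearIndependent_of_isWeightedLeadingMonomial (ht : Injective t)
    (hf : ∀ i, IsWeightedLeadingMonomial w (f i) (t i)) : LinearIndependent R f := by
  classical
  rw [linearIndependent_iff']
  intro S c hsum i hi
  by_contra hci
  obtain ⟨j, hj, hmax⟩ := (S.filter (c · ≠ 0)).exists_max_image (fun i => weight w (t i))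
    ⟨i, Finset.mem_filter.mpr ⟨hi, hci⟩⟩
  rw [Finset.mem_filter] at hj
  have hcoeff := congrArg (coeff (t j)) hsum
  rw [coeff_zero, coeff_sum, Finset.sum_eq_single j (fun l hl hlj => ?_) (fun h => absurd hj.1 h),
    coeff_smul, (hf j).1, smul_eq_mul, mul_one] at hcoeff
  · exact hj.2 hcoeff
  by_cases hcl : c l = 0
  · rw [hcl, zero_smul, coeff_zero]
  rw [coeff_smul, (hf l).coeff_eq_zero_of_weight_le (ht.ne hlj).symm
    (hmax l (Finset.mem_filter.mpr ⟨hl, hcl⟩)), smul_zero]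

theorem span_eq_top_of_isWeightedLeadingMonomial (ht : Surjective t)
    (hf : ∀ i, IsWeightedLeadingMonomial w (f i) (t i)) :
    Submodule.span R (Set.range f) = ⊤ := by
  classical
  suffices h : ∀ ν, monomial ν (1 : R) ∈ Submodule.span R (Set.range f) from
    eq_top_iff.mpr fun p _ => mem_of_monomial_one_mem fun ν _ => h ν
  intro ν
  induction hn : weight w ν using Nat.strong_induction_on generalizing ν with
  | _ n ih =>
    obtain ⟨i, rfl⟩ := ht ν
    have hlower : f i - monomial (t i) 1 ∈ Submodule.span R (Set.range f) := by
      refine mem_of_monomial_one_mem fun μ hμ => ih _ ?_ μ rfl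
      have hμi : μ ≠ t i := by
        rintro rfl
        simp [coeff_monomial, (hf i).1] at hμ
      have hμf : μ ∈ (f i).support := by
        simpa [coeff_monomial, Ne.symm hμi] using hμ
      exact hn ▸ (hf i).2 μ hμf hμi
    simpa using Submodule.sub_mem _ (Submodule.subset_span (Set.mem_range_self i)) hlower

end MvPolynomial

section StandardMonomials

variable {σ P : Type*} (s : P → σ →₀ ℕ)

def IsStandardMonomial (μ : σ →₀ ℕ) : Prop := ∀ p, ¬ s p ≤ μ

variable {s}

theorem linearCombination_apply_of_mem_support
    (hdisj : Pairwise (Disjoint on fun p => (s p).support)) (e : P →₀ ℕ) {p : P} {v : σ}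
    (hv : v ∈ (s p).support) : linearCombination ℕ s e v = e p * s p v := by
  classical
  rw [linearCombination_apply, Finsupp.sum, Finset.sum_apply', Finset.sum_eq_single p]
  · rfl
  · intro q _ hqp
    simp [notMem_support_iff.mp (Finset.disjoint_left.mp (hdisj hqp.symm) hv)]
  · intro hp
    simp [notMem_support_iff.mp hp]

theorem le_of_linearCombination_add_eq (hdisj : Pairwise (Disjoint on fun p => (s p).support))
    {e e' : P →₀ ℕ} {μ μ' : σ →₀ ℕ} (hμ : IsStandardMonomial s μ)
    (h : linearCombination ℕ s e + μ = linearCombination ℕ s e' + μ') : e' ≤ e := by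
  intro p
  obtain ⟨v, hv⟩ : ∃ v, μ v < s p v := by simpa [Finsupp.le_def] using hμ p
  have hmem : v ∈ (s p).support := mem_support_iff.mpr (by omega)
  have hv' := DFunLike.congr_fun h v
  simp only [Finsupp.add_apply, linearCombination_apply_of_mem_support hdisj _ hmem] at hv'
  by_contra! hlt
  nlinarith

theorem exists_linearCombination_add_eq (hs : ∀ p, s p ≠ 0) (ν : σ →₀ ℕ) :
    ∃ e μ, IsStandardMonomial s μ ∧ linearCombination ℕ s e + μ = ν := by
  induction ν using WellFoundedLT.induction with
  | _ ν ih =>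
    by_cases hν : IsStandardMonomial s ν
    · exact ⟨0, ν, hν, by simp⟩
    obtain ⟨p, hp⟩ : ∃ p, s p ≤ ν := by simpa [IsStandardMonomial] using hν
    have hlt : ν - s p < ν := tsub_le_self.lt_of_ne fun h => hs p <| by
      simpa [h] using tsub_add_cancel_of_le hp
    obtain ⟨e, μ, hμ, he⟩ := ih _ hlt
    refine ⟨e + single p 1, μ, hμ, ?_⟩
    rw [map_add, linearCombination_single, one_smul, add_right_comm, he, tsub_add_cancel_of_le hp]

theorem bijective_linearCombination_add (hs : ∀ p, s p ≠ 0)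
    (hdisj : Pairwise (Disjoint on fun p => (s p).support)) :
    Bijective fun x : {μ // IsStandardMonomial s μ} × (P →₀ ℕ) =>
      linearCombination ℕ s x.2 + x.1.1 := by
  refine ⟨fun ⟨μ, e⟩ ⟨μ', e'⟩ h => ?_, fun ν => ?_⟩
  · have he : e = e' := le_antisymm (le_of_linearCombination_add_eq hdisj μ'.2 h.symm)
      (le_of_linearCombination_add_eq hdisj μ.2 h)
    subst he
    exact Prod.ext (Subtype.ext (add_left_cancel h)) rfl
  · obtain ⟨e, μ, hμ, h⟩ := exists_linearCombination_add_eq hs ν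
    exact ⟨(⟨μ, hμ⟩, e), h⟩

end StandardMonomials

section ScalarTower

variable {K B A E J : Type*} [CommRing K] [CommRing B] [AddCommGroup A] [Algebra K B] [Module B A]
  [Module K A] [IsScalarTower K B A] {b : E → B} {m : J → A}

theorem linearIndependent_of_linearIndependent_smul (hb : Submodule.span K (Set.range b) = ⊤)
    (h : LinearIndependent K fun x : J × E => b x.2 • m x.1) : LinearIndependent B m := by
  have hsurj : Surjective (linearCombination K b) := by
    rw [← LinearMap.range_eq_top, range_linearCombination, hb]
  -- precomposed with the surjection `(J × E →₀ K) → (J →₀ B)`, `linearCombination B m` is the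
  -- injective map `linearCombination K (b • m)`
  have hcomp : (linearCombination B m).restrictScalars K ∘ₗ
      mapRange.linearMap (linearCombination K b) ∘ₗ (curryLinearEquiv K).toLinearMap =
      linearCombination K fun x : J × E => b x.2 • m x.1 := by
    ext ⟨j, e⟩
    simp [curryLinearEquiv]
  rw [LinearIndependent, ← hcomp, LinearMap.coe_comp, LinearMap.coe_comp] at h
  exact h.of_comp_right
    ((mapRange_surjective _ (map_zero _) hsurj).comp (curryLinearEquiv K).surjective)

theorem span_eq_top_of_span_smul_eq_top
    (h : Submodule.span K (Set.range fun x : J × E => b x.2 • m x.1) = ⊤) :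
    Submodule.span B (Set.range m) = ⊤ := by
  rw [eq_top_iff, ← Submodule.restrictScalars_le K, Submodule.restrictScalars_top, ← h,
    Submodule.span_le]
  rintro _ ⟨x, rfl⟩
  exact Submodule.smul_mem _ _ (Submodule.subset_span (Set.mem_range_self x.1))

end ScalarTower

namespace MvPolynomial

variable {R σ P : Type*} [CommRing R]

theorem free_adjoin_range_of_isWeightedLeadingMonomial {w : σ → ℕ} {g : P → MvPolynomial σ R}
    {s : P → σ →₀ ℕ} (hs : ∀ p, s p ≠ 0) (hdisj : Pairwise (Disjoint on fun p => (s p).support))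
    (hg : ∀ p, IsWeightedLeadingMonomial w (g p) (s p)) :
    Module.Free (Algebra.adjoin R (Set.range g)) (MvPolynomial σ R) := by
  rw [Algebra.adjoin_range_eq_range_aeval]
  set b : (P →₀ ℕ) → (aeval (R := R) g).range := fun e => (aeval g).rangeRestrict (monomial e 1)
  have hb : Submodule.span R (Set.range b) = ⊤ := by
    have hrange : Set.range b =
        (aeval (R := R) g).rangeRestrict.toLinearMap '' Set.range (basisMonomials P R) := by
      rw [← Set.range_comp, coe_basisMonomials]
      rfl
    rw [hrange, Submodule.span_image, (basisMonomials P R).span_eq, Submodule.map_top,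
      LinearMap.range_eq_top]
    exact (aeval g).rangeRestrict_surjective
  have hlead (x : {μ // IsStandardMonomial s μ} × (P →₀ ℕ)) :
      IsWeightedLeadingMonomial w (b x.2 • monomial x.1.1 (1 : R))
        (linearCombination ℕ s x.2 + x.1.1) := by
    change IsWeightedLeadingMonomial w (aeval (R := R) g (monomial x.2 1) * monomial x.1.1 1) _
    exact (IsWeightedLeadingMonomial.aeval_monomial hg x.2).mul (.monomial_one x.1.1)
  have hbij := bijective_linearCombination_add hs hdisj
  have hli : LinearIndependent (aeval (R := R) g).range
      fun μ : {μ // IsStandardMonomial s μ} => monomial μ.1 (1 : R) :=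
    linearIndependent_of_linearIndependent_smul hb
      (linearIndependent_of_isWeightedLeadingMonomial hbij.1 hlead)
  have hsp : Submodule.span (aeval (R := R) g).range
      (Set.range fun μ : {μ // IsStandardMonomial s μ} => monomial μ.1 (1 : R)) = ⊤ :=
    span_eq_top_of_span_smul_eq_top (span_eq_top_of_isWeightedLeadingMonomial hbij.2 hlead)
  exact .of_basis (Module.Basis.mk hli hsp.ge)

end MvPolynomial

section MomentMap

variable (K : Type*) [CommRing K] (N m : ℕ)

noncomputable def momentMap : Sym2 (Fin m) → MvPolynomial (Fin N × Fin m) K :=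
  Sym2.lift ⟨fun a b => ∑ i, X (i, a) * X (i, b), fun a b => by simp only [mul_comm]⟩

theorem setOf_eq_range_momentMap :
    {p : MvPolynomial (Fin N × Fin m) K | ∃ a b : Fin m, p = ∑ i : Fin N, X (i, a) * X (i, b)} =
      Set.range (momentMap K N m) := by
  ext p
  constructor
  · rintro ⟨a, b, rfl⟩
    exact ⟨s(a, b), rfl⟩
  · rintro ⟨q, rfl⟩
    induction q using Sym2.ind with
    | _ a b => exact ⟨a, b, rfl⟩

-- Up to a summand depending only on `a`, the weight of `(i, a)` is `N² - (i - 2a)²`, so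
-- `i ↦ w (i, a) + w (i, b)` is strictly concave with its maximum at `i = a + b`.
def momentMapWeight (v : Fin N × Fin m) : ℕ := 4 * v.2 * v.1 + (N ^ 2 - v.1 ^ 2)

variable {K N m}

theorem momentMapWeight_add_lt {a b : Fin m} {i r : Fin N} (hr : (r : ℕ) = a + b) (hi : i ≠ r) :
    momentMapWeight N m (i, a) + momentMapWeight N m (i, b) <
      momentMapWeight N m (r, a) + momentMapWeight N m (r, b) := by
  have hir : (i : ℤ) ≠ r := by exact_mod_cast Fin.val_injective.ne hi
  have hsq : (0 : ℤ) < ((i : ℤ) - r) ^ 2 := by positivity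
  have hiN : (i : ℕ) ^ 2 ≤ N ^ 2 := Nat.pow_le_pow_left i.isLt.le 2
  have hrN : (r : ℕ) ^ 2 ≤ N ^ 2 := Nat.pow_le_pow_left r.isLt.le 2
  simp only [momentMapWeight]
  zify [hiN, hrN]
  rw [hr] at hsq ⊢
  push_cast at hsq ⊢
  nlinarith

def diagonalRow (hm : 2 * m ≤ N + 1) (a b : Fin m) : Fin N := ⟨a + b, by omega⟩

theorem diagonalRow_comm (hm : 2 * m ≤ N + 1) (a b : Fin m) :
    diagonalRow hm a b = diagonalRow hm b a :=
  Fin.ext (Nat.add_comm _ _)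

noncomputable def momentMapLeadingMonomial (hm : 2 * m ≤ N + 1) :
    Sym2 (Fin m) → Fin N × Fin m →₀ ℕ :=
  Sym2.lift ⟨fun a b => single (diagonalRow hm a b, a) 1 + single (diagonalRow hm a b, b) 1,
    fun a b => by dsimp only; rw [add_comm, diagonalRow_comm]⟩

theorem momentMapLeadingMonomial_ne_zero (hm : 2 * m ≤ N + 1) (p : Sym2 (Fin m)) :
    momentMapLeadingMonomial hm p ≠ 0 := by
  induction p using Sym2.ind with
  | _ a b => simp [momentMapLeadingMonomial]

theorem mem_support_momentMapLeadingMonomial {hm : 2 * m ≤ N + 1} {a b : Fin m}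
    {v : Fin N × Fin m} (hv : v ∈ (momentMapLeadingMonomial hm s(a, b)).support) :
    (v.1 : ℕ) = a + b ∧ (v.2 = a ∨ v.2 = b) := by
  classical
  have := Finsupp.support_add hv
  simp only [Finset.mem_union] at this
  rcases this with h | h <;> obtain rfl := Finset.mem_singleton.mp (support_single_subset h) <;>
    simp [diagonalRow]

theorem pairwise_disjoint_support_momentMapLeadingMonomial (hm : 2 * m ≤ N + 1) :
    Pairwise (Disjoint on fun p => (momentMapLeadingMonomial hm p).support) := by
  intro p q hpq
  induction p using Sym2.ind with | _ a b =>
  induction q using Sym2.ind with | _ a' b' =>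
  refine Finset.disjoint_left.mpr fun v hv hv' => hpq ?_
  obtain ⟨hrow, hcol⟩ := mem_support_momentMapLeadingMonomial hv
  obtain ⟨hrow', hcol'⟩ := mem_support_momentMapLeadingMonomial hv'
  simp only [Sym2.eq_iff, Fin.ext_iff] at hcol hcol' ⊢
  omega

theorem isWeightedLeadingMonomial_momentMap (hm : 2 * m ≤ N + 1) (p : Sym2 (Fin m)) :
    IsWeightedLeadingMonomial (momentMapWeight N m) (momentMap K N m p)
      (momentMapLeadingMonomial hm p) := by
  induction p using Sym2.ind with | _ a b =>
  have hX (i : Fin N) : (X (i, a) * X (i, b) : MvPolynomial (Fin N × Fin m) K) =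
      monomial (single (i, a) 1 + single (i, b) 1) 1 := by
    simp [X, monomial_mul]
  simp only [momentMap, momentMapLeadingMonomial, Sym2.lift_mk, hX]
  refine IsWeightedLeadingMonomial.sum_monomial_one (Finset.mem_univ _) fun i _ hi => ?_
  simpa [weight_single] using momentMapWeight_add_lt rfl hi

end MomentMap

theorem free_over_moment_map_subalgebra_sp_general
    (K : Type*) [Field K]
    (N k : ℕ) (hstable : 4 * k ≤ N) :
    Module.Free
      (Algebra.adjoin K
        {p : MvPolynomial (Fin N × Fin (2 * k)) K |
          ∃ a b : Fin (2 * k), p = ∑ i : Fin N, X (i, a) * X (i, b)})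
      (MvPolynomial (Fin N × Fin (2 * k)) K) := by
  have hm : 2 * (2 * k) ≤ N + 1 := by omega
  rw [setOf_eq_range_momentMap]
  exact free_adjoin_range_of_isWeightedLeadingMonomial (momentMapLeadingMonomial_ne_zero hm)
    (pairwise_disjoint_support_momentMapLeadingMonomial hm) (isWeightedLeadingMonomial_momentMap hm)

/-- For the dual pair `(o_N, sp_{2k})` in the stable range `N ≥ 4k`, the
polynomial ring `R = K[z_{ia}]` is a free module over the subalgebra generated by the moment
map components `g_{ab} = Σ_i z_{ia} z_{ib}`. -/
theorem free_over_moment_map_subalgebra_sp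
    (K : Type*) [Field K] [IsAlgClosed K] [CharZero K]
    (N k : ℕ) (hN : 0 < N) (hk : 0 < k) (hstable : 4 * k ≤ N) :
    Module.Free
      (Algebra.adjoin K
        {p : MvPolynomial (Fin N × Fin (2 * k)) K |
          ∃ a b : Fin (2 * k), p = ∑ i : Fin N, X (i, a) * X (i, b)})
      (MvPolynomial (Fin N × Fin (2 * k)) K) :=
  free_over_moment_map_subalgebra_sp_general K N k hstable
end

section
/- Let K be a field of characteristic zero and n, k positive integers. On the polynomial algebra P = MvPolynomial (Fin n × Fin k) K, for each i ∈ Fin n, a ∈ Fin k let x_{ia} denote the K-linear endomorphism of P given by multiplication by the variable x_{ia}, and ∂_{ia} the partial derivative pderiv (i,a); set R_{ij} = Σ_{a ∈ Fin k} x_{ia} ∘ ∂_{ja} for i, j ∈ Fin n, and L_{ab} = Σ_{l ∈ Fin n} x_{la} ∘ ∂_{lb} for a, b ∈ Fin k. Then for all i, j ∈ Fin n: Σ_{a,b ∈ Fin k} L_{ab} ∘ x_{ib} ∘ ∂_{ja} = Σ_{l ∈ Fin n} R_{il} ∘ R_{lj} + (k − n)·R_{ij}, as K-linear endomorphisms of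 P. -/
open MvPolynomial

variable (K : Type*) [Field K] (n k : ℕ)

noncomputable def xOp (v : Fin n × Fin k) :
    MvPolynomial (Fin n × Fin k) K →ₗ[K] MvPolynomial (Fin n × Fin k) K :=
  LinearMap.mulLeft K (X v)

noncomputable def dOp (v : Fin n × Fin k) :
    MvPolynomial (Fin n × Fin k) K →ₗ[K] MvPolynomial (Fin n × Fin k) K :=
  (pderiv v).toLinearMap

lemma myPderivComm {σ R : Type*} [CommRing R] (u v : σ) (p : MvPolynomial σ R) :
    pderiv u (pderiv v p) = pderiv v (pderiv u p) := by
  classical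
  induction p using MvPolynomial.induction_on with
  | C a => simp
  | add p q hp hq => simp [hp, hq]
  | mul_X p m hp =>
      by_cases h1 : v = m <;> by_cases h2 : u = m <;> subst_vars <;>
        simp [pderiv_mul, Pi.single_apply, hp, *] <;> ring

lemma dx (v w : Fin n × Fin k) : dOp K n k v ∘ₗ xOp K n k w
    = xOp K n k w ∘ₗ dOp K n k v + (if v = w then (1 : K) else 0) • LinearMap.id := by
  apply LinearMap.ext; intro p
  classical
  by_cases h : v = w <;>
    simp [dOp, xOp, pderiv_mul, pderiv_X, h, Pi.single_apply, mul_comm, add_comm]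

lemma xx (v w : Fin n × Fin k) : xOp K n k v ∘ₗ xOp K n k w = xOp K n k w ∘ₗ xOp K n k v := by
  apply LinearMap.ext; intro p
  simp [xOp, mul_left_comm]

lemma dd (v w : Fin n × Fin k) : dOp K n k v ∘ₗ dOp K n k w = dOp K n k w ∘ₗ dOp K n k v := by
  apply LinearMap.ext; intro p
  simp [dOp, myPderivComm]


lemma sumComp {ι M : Type*} [AddCommMonoid M] [Module K M] (s : Finset ι)
    (f : ι → M →ₗ[K] M) (g : M →ₗ[K] M) :
    (∑ l ∈ s, f l) ∘ₗ g = ∑ l ∈ s, f l ∘ₗ g := by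
  simp only [← Module.End.mul_eq_comp, Finset.sum_mul]

lemma compSum {ι M : Type*} [AddCommMonoid M] [Module K M] (s : Finset ι)
    (f : ι → M →ₗ[K] M) (g : M →ₗ[K] M) :
    g ∘ₗ (∑ l ∈ s, f l) = ∑ l ∈ s, g ∘ₗ f l := by
  simp only [← Module.End.mul_eq_comp, Finset.mul_sum]

noncomputable def ROp (i j : Fin n) :
    MvPolynomial (Fin n × Fin k) K →ₗ[K] MvPolynomial (Fin n × Fin k) K :=
  ∑ a : Fin k, xOp K n k (i, a) ∘ₗ dOp K n k (j, a)

noncomputable def LOp (a b : Fin k) :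
    MvPolynomial (Fin n × Fin k) K →ₗ[K] MvPolynomial (Fin n × Fin k) K :=
  ∑ l : Fin n, xOp K n k (l, a) ∘ₗ dOp K n k (l, b)

/-- For all `i, j`:
`Σ_{a,b} L_{ab} ∘ x_{ib} ∘ ∂_{ja} = Σ_l R_{il} ∘ R_{lj} + (k − n)·R_{ij}`. -/
theorem transfer_pairing_gl [CharZero K] (hn : 0 < n) (hk : 0 < k) (i j : Fin n) :
    ∑ a : Fin k, ∑ b : Fin k, LOp K n k a b ∘ₗ xOp K n k (i, b) ∘ₗ dOp K n k (j, a)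
      = (∑ l : Fin n, ROp K n k i l ∘ₗ ROp K n k l j) + ((k : K) - (n : K)) • ROp K n k i j := by
  classical
  set P := fun (l : Fin n) (a b : Fin k) =>
    xOp K n k (l,a) ∘ₗ xOp K n k (i,b) ∘ₗ dOp K n k (l,b) ∘ₗ dOp K n k (j,a) with hP
  have term1 : ∀ (l : Fin n) (a b : Fin k),
      (xOp K n k (l,a) ∘ₗ dOp K n k (l,b)) ∘ₗ xOp K n k (i,b) ∘ₗ dOp K n k (j,a)
        = P l a b + (if l = i then (1:K) else 0) • (xOp K n k (l,a) ∘ₗ dOp K n k (j,a)) := by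
    intro l a b
    rw [LinearMap.comp_assoc,
      ← LinearMap.comp_assoc (dOp K n k (j,a)) (xOp K n k (i,b)) (dOp K n k (l,b)), dx]
    simp only [LinearMap.comp_add, LinearMap.add_comp, LinearMap.comp_smul,
      LinearMap.smul_comp, LinearMap.id_comp, LinearMap.comp_id, Prod.mk.injEq, and_true,
      LinearMap.comp_assoc, hP]
  have hLHS : ∑ a : Fin k, ∑ b : Fin k, LOp K n k a b ∘ₗ xOp K n k (i, b) ∘ₗ dOp K n k (j, a)
      = (∑ a : Fin k, ∑ b : Fin k, ∑ l : Fin n, P l a b) + (k : K) • ROp K n k i j := by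
    have key : ∀ a b : Fin k, LOp K n k a b ∘ₗ xOp K n k (i, b) ∘ₗ dOp K n k (j, a)
        = (∑ l : Fin n, P l a b) + xOp K n k (i,a) ∘ₗ dOp K n k (j,a) := by
      intro a b
      rw [LOp, sumComp, Finset.sum_congr rfl fun l _ => term1 l a b,
        Finset.sum_add_distrib]
      congr 1
      simp [ite_smul]
    rw [Finset.sum_congr rfl fun a _ => Finset.sum_congr rfl fun b _ => key a b]
    simp only [Finset.sum_add_distrib, Finset.sum_const, Finset.card_univ, Fintype.card_fin]
    congr 1
    rw [ROp, Finset.smul_sum]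
    exact Finset.sum_congr rfl fun a _ => (Nat.cast_smul_eq_nsmul K k _).symm
  set P' := fun (l : Fin n) (a b : Fin k) =>
    xOp K n k (i,a) ∘ₗ xOp K n k (l,b) ∘ₗ dOp K n k (l,a) ∘ₗ dOp K n k (j,b) with hP'
  have term2 : ∀ (l : Fin n) (a b : Fin k),
      (xOp K n k (i,a) ∘ₗ dOp K n k (l,a)) ∘ₗ xOp K n k (l,b) ∘ₗ dOp K n k (j,b)
        = P' l a b + (if a = b then (1:K) else 0) • (xOp K n k (i,a) ∘ₗ dOp K n k (j,b)) := by
    intro l a b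
    rw [LinearMap.comp_assoc,
      ← LinearMap.comp_assoc (dOp K n k (j,b)) (xOp K n k (l,b)) (dOp K n k (l,a)), dx]
    simp only [LinearMap.comp_add, LinearMap.add_comp, LinearMap.comp_smul,
      LinearMap.smul_comp, LinearMap.id_comp, LinearMap.comp_id, Prod.mk.injEq, true_and,
      LinearMap.comp_assoc, hP']
  have hRR : ∀ l : Fin n, ROp K n k i l ∘ₗ ROp K n k l j
      = (∑ a : Fin k, ∑ b : Fin k, P' l a b) + ROp K n k i j := by
    intro l
    conv_lhs => rw [ROp, ROp, sumComp]
    rw [Finset.sum_congr rfl fun a _ => compSum K Finset.univ _ _]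
    rw [Finset.sum_congr rfl fun a _ =>
      Finset.sum_congr rfl fun b _ => term2 l a b]
    simp only [Finset.sum_add_distrib]
    congr 1
    rw [ROp]
    exact Finset.sum_congr rfl fun a _ => by simp [ite_smul]
  have hRHS : ∑ l : Fin n, ROp K n k i l ∘ₗ ROp K n k l j
      = (∑ l : Fin n, ∑ a : Fin k, ∑ b : Fin k, P' l a b) + (n : K) • ROp K n k i j := by
    rw [Finset.sum_congr rfl fun l _ => hRR l, Finset.sum_add_distrib]
    congr 1
    simp [Nat.cast_smul_eq_nsmul]
  have hquart : (∑ a : Fin k, ∑ b : Fin k, ∑ l : Fin n, P l a b)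
      = ∑ l : Fin n, ∑ a : Fin k, ∑ b : Fin k, P' l a b := by
    have hswap : ∀ (l : Fin n) (a b : Fin k), P l a b = P' l b a := by
      intro l a b
      simp only [hP, hP']
      rw [← LinearMap.comp_assoc _ (xOp K n k (i,b)) (xOp K n k (l,a)), xx,
        LinearMap.comp_assoc]
    calc (∑ a : Fin k, ∑ b : Fin k, ∑ l : Fin n, P l a b)
        = ∑ a : Fin k, ∑ l : Fin n, ∑ b : Fin k, P l a b :=
          Finset.sum_congr rfl fun a _ => Finset.sum_comm
      _ = ∑ l : Fin n, ∑ a : Fin k, ∑ b : Fin k, P l a b := Finset.sum_comm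
      _ = ∑ l : Fin n, ∑ a : Fin k, ∑ b : Fin k, P' l a b := by
          refine Finset.sum_congr rfl fun l _ => ?_
          rw [Finset.sum_comm]
          exact Finset.sum_congr rfl fun a _ => Finset.sum_congr rfl fun b _ => hswap l b a
  rw [hLHS, hRHS, hquart, add_assoc]
  congr 1
  rw [← add_smul]
  congr 1
  ring
end

section
/- Let K be a field of characteristic zero and n, k positive integers. On the polynomial algebra P = MvPolynomial (Fin n × Fin k) K, for each i ∈ Fin n, a ∈ Fin k let x_{ia} denote the K-linear endomorphism given by multiplication by the variable x_{ia}, and ∂_{ia} the partial derivative pderiv (i,a); set R_{ij} = Σ_{a ∈ Fin k} x_{ia} ∘ ∂_{ja} and L_{ab} = Σ_{l ∈ Fin n} x_{la} ∘ ∂_{lb}. Then for all i, j ∈ Fin n and all a, b ∈ Fin k, the endomorphisms R_{ij} and L_{ab} commute: R_{ij} ∘ L_{ab} = L_{ab} ∘ R_{ij}. -/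
open MvPolynomial

variable (K : Type*) [Field K] (n k : ℕ)

/-!
`x_u ∘ ∂_v` is a derivation of `P`, so `R_{ij}` and `L_{ab}` are derivations and so is their
commutator. A derivation of a polynomial algebra is determined by its values on the variables,
and on `x_{lc}` both `R_{ij} ∘ L_{ab}` and `L_{ab} ∘ R_{ij}` give `δ_{jl} δ_{bc} x_{ia}`.
-/

theorem Derivation.sum_apply {R A M ι : Type*} [CommSemiring R] [CommSemiring A] [Algebra R A]
    [AddCommMonoid M] [Module A M] [Module R M] (s : Finset ι) (D : ι → Derivation R A M)
    (a : A) : (∑ i ∈ s, D i) a = ∑ i ∈ s, D i a := by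
  rw [← Derivation.coeFnAddMonoidHom_apply, map_sum, Finset.sum_apply]
  rfl

theorem MvPolynomial.derivation_comp_comm_of_X {σ R : Type*} [CommRing R]
    (D₁ D₂ : Derivation R (MvPolynomial σ R) (MvPolynomial σ R))
    (h : ∀ v, D₁ (D₂ (X v)) = D₂ (D₁ (X v))) :
    (D₁ : MvPolynomial σ R →ₗ[R] MvPolynomial σ R) ∘ₗ (D₂ : MvPolynomial σ R →ₗ[R] _) =
      (D₂ : MvPolynomial σ R →ₗ[R] MvPolynomial σ R) ∘ₗ (D₁ : MvPolynomial σ R →ₗ[R] _) := by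
  have hbracket : ⁅D₁, D₂⁆ = 0 :=
    derivation_ext fun v => by rw [Derivation.commutator_apply, h, sub_self, Derivation.zero_apply]
  exact LinearMap.ext fun p => sub_eq_zero.mp <| by
    simpa [Derivation.commutator_apply] using congrArg (· p) hbracket

noncomputable def rDeriv (i j : Fin n) :
    Derivation K (MvPolynomial (Fin n × Fin k) K) (MvPolynomial (Fin n × Fin k) K) :=
  ∑ a : Fin k, (X (i, a) : MvPolynomial (Fin n × Fin k) K) • pderiv (j, a)

noncomputable def lDeriv (a b : Fin k) :
    Derivation K (MvPolynomial (Fin n × Fin k) K) (MvPolynomial (Fin n × Fin k) K) :=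
  ∑ l : Fin n, (X (l, a) : MvPolynomial (Fin n × Fin k) K) • pderiv (l, b)

theorem rDeriv_apply (i j : Fin n) (p : MvPolynomial (Fin n × Fin k) K) :
    rDeriv K n k i j p = ∑ a : Fin k, X (i, a) * pderiv (j, a) p := by
  simp [rDeriv, Derivation.sum_apply]

theorem lDeriv_apply (a b : Fin k) (p : MvPolynomial (Fin n × Fin k) K) :
    lDeriv K n k a b p = ∑ l : Fin n, X (l, a) * pderiv (l, b) p := by
  simp [lDeriv, Derivation.sum_apply]

theorem coe_rDeriv (i j : Fin n) : (rDeriv K n k i j : _ →ₗ[K] _) = ROp K n k i j :=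
  LinearMap.ext fun p => by simp [rDeriv_apply, ROp, xOp, dOp]

theorem coe_lDeriv (a b : Fin k) : (lDeriv K n k a b : _ →ₗ[K] _) = LOp K n k a b :=
  LinearMap.ext fun p => by simp [lDeriv_apply, LOp, xOp, dOp]

theorem rDeriv_X (i j l : Fin n) (c : Fin k) :
    rDeriv K n k i j (X (l, c)) = if l = j then X (i, c) else 0 := by
  by_cases hl : l = j <;> simp [rDeriv_apply, pderiv_X, Pi.single_apply, hl]

theorem lDeriv_X (a b c : Fin k) (l : Fin n) :
    lDeriv K n k a b (X (l, c)) = if c = b then X (l, a) else 0 := by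
  by_cases hc : c = b <;> simp [lDeriv_apply, pderiv_X, Pi.single_apply, hc]

theorem oscillator_dual_pair_commutes (i j : Fin n) (a b : Fin k) :
    ROp K n k i j ∘ₗ LOp K n k a b = LOp K n k a b ∘ₗ ROp K n k i j := by
  rw [← coe_rDeriv, ← coe_lDeriv]
  refine MvPolynomial.derivation_comp_comm_of_X _ _ fun ⟨l, c⟩ => ?_
  by_cases hl : l = j <;> by_cases hc : c = b <;> simp [rDeriv_X, lDeriv_X, hl, hc]
end

section
/- Let K be a field of characteristic zero and n, k positive integers. In the universal enveloping algebra U(gl_n), for any two sequences I, J : Fin (k+1) → Fin n, the row-type and column-type quantum determinants agree: Σ_{σ ∈ Perm (Fin (k+1))} sgn(σ) · ∏_{m=0}^{k} (ι(E_{I(σ(m)), J(m)}) + (k − m)·δ_{I(σ(m)), J(m)}·1) = Σ_{σ ∈ Perm (Fin (k+1))} sgn(σ) · ∏_{m=0}^{k} (ι(E_{I(m), J(σ(m))}) + m·δ_{I(m), J(σ(m))}·1), where both products are ordered products taken with m increasing from 0 to k. -/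
/-!
Write the factors `E_{ab} + v δ_{ab}` as a family `X m x p` indexed by the position `m` of the
factor in the ordered product, a row index `x` and a column index `p`, and antisymmetrize over rows
and columns at once: `Σ_{σ,τ} sgn σ sgn τ ∏_{m ∈ L} X m (σ m) (τ m)`.

In the row-type determinant the shift drops by one from each position to the next, and the
commutation relations of `gl_n` then give a two-factor identity showing that it is antisymmetric in
its columns as well. Hence the double sum, with the positions in decreasing order, is `(k+1)!` times
the row-type determinant; dually, with the positions in increasing order it is `(k+1)!` times the
column-type one. Finally the double sum does not depend on the order of the positions: swapping two
adjacent factors changes it by a sum of commutators, which do not see the shifts and cancel in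
pairs. Dividing by `(k+1)!` gives the result.
-/

variable (K : Type*) [Field K] (n k : ℕ)

attribute [local instance] LieRing.ofAssociativeRing

/-- The row-type quantum determinant of order `k+1`:
`Σ_σ sgn(σ) ∏_{m=0}^{k} (ι(E_{I(σ(m)),J(m)}) + (k−m)·δ_{I(σ(m)),J(m)}·1)`,
the product ordered with `m` increasing. -/
noncomputable def qMinorRow (I J : Fin (k + 1) → Fin n) :
    UniversalEnvelopingAlgebra K (Matrix (Fin n) (Fin n) K) :=
  ∑ σ : Equiv.Perm (Fin (k + 1)),
    (Equiv.Perm.sign σ : ℤ) •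
      (List.ofFn fun m : Fin (k + 1) =>
        UniversalEnvelopingAlgebra.ι K (Matrix.single (I (σ m)) (J m) (1 : K))
          + (if I (σ m) = J m then ((k : K) - ((m : ℕ) : K)) •
              (1 : UniversalEnvelopingAlgebra K (Matrix (Fin n) (Fin n) K)) else 0)).prod

/-- The column-type quantum determinant of order `k+1`:
`Σ_σ sgn(σ) ∏_{m=0}^{k} (ι(E_{I(m),J(σ(m))}) + m·δ_{I(m),J(σ(m))}·1)`,
the product ordered with `m` increasing. -/
noncomputable def qMinorCol (I J : Fin (k + 1) → Fin n) :
    UniversalEnvelopingAlgebra K (Matrix (Fin n) (Fin n) K) :=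
  ∑ σ : Equiv.Perm (Fin (k + 1)),
    (Equiv.Perm.sign σ : ℤ) •
      (List.ofFn fun m : Fin (k + 1) =>
        UniversalEnvelopingAlgebra.ι K (Matrix.single (I m) (J (σ m)) (1 : K))
          + (if I m = J (σ m) then (((m : ℕ) : K)) •
              (1 : UniversalEnvelopingAlgebra K (Matrix (Fin n) (Fin n) K)) else 0)).prod

open Equiv Equiv.Perm

theorem Equiv.Perm.eq_sign_smul_of_map_mul_swap_castSucc_succ {M : Type*} [AddCommGroup M]
    {N : ℕ} {f : Perm (Fin (N + 1)) → M}
    (hf : ∀ τ (i : Fin N), f (τ * swap i.castSucc i.succ) = -f τ) (τ : Perm (Fin (N + 1))) :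
    f τ = (sign τ : ℤ) • f 1 := by
  induction τ using Submonoid.induction_of_closure_eq_top_right (mclosure_swap_castSucc_succ N)
    with
  | one => simp
  | mul_right τ s hs ih =>
    obtain ⟨i, rfl⟩ := hs
    rw [hf, ih, sign_mul, sign_swap i.castSucc_lt_succ.ne]
    simp

theorem List.exists_finRange_eq_append_castSucc_succ {N : ℕ} (i : Fin N) :
    ∃ La Lb, List.finRange (N + 1) = La ++ i.castSucc :: i.succ :: Lb := by
  induction N with
  | zero => exact i.elim0
  | succ N ih =>
    rw [List.finRange_succ]
    cases i using Fin.cases with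
    | zero => exact ⟨[], (List.finRange N).map (Fin.succ ∘ Fin.succ), by simp [List.finRange_succ]⟩
    | succ j =>
      obtain ⟨La, Lb, h⟩ := ih j
      exact ⟨0 :: La.map Fin.succ, Lb.map Fin.succ, by simp [h]⟩

theorem List.Perm.apply_eq_of_swap_adjacent {α β : Type*} {f : List α → β}
    (hf : ∀ La Lb a b, (La ++ a :: b :: Lb).Nodup →
      f (La ++ a :: b :: Lb) = f (La ++ b :: a :: Lb))
    {L L' : List α} (h : L.Perm L') (hL : L.Nodup) : f L = f L' := by
  suffices ∀ L₀, (L₀ ++ L).Nodup → f (L₀ ++ L) = f (L₀ ++ L') from this [] hL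
  clear hL
  induction h with
  | nil => intro _ _; rfl
  | cons x _ ih =>
    intro L₀ hnd
    simpa using ih (L₀ ++ [x]) (by simpa using hnd)
  | swap x y l => exact fun L₀ hnd => hf L₀ l y x hnd
  | trans h₁ _ ih₁ ih₂ =>
    exact fun L₀ hnd => (ih₁ L₀ hnd).trans (ih₂ L₀ ((h₁.append_left L₀).nodup_iff.1 hnd))

theorem Equiv.mul_swap_apply_of_mem_append {α : Type*} [DecidableEq α] {La Lb : List α}
    {a b : α} (h : (La ++ a :: b :: Lb).Nodup) (σ : Perm α) :
    ∀ m ∈ La ++ Lb, (σ * swap a b) m = σ m := by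
  intro m hm
  rw [List.nodup_middle, List.nodup_cons, List.nodup_middle] at h
  simp only [List.mem_cons, List.mem_append, List.nodup_cons, List.mem_append] at h hm
  rw [Perm.mul_apply, swap_apply_of_ne_of_ne] <;> grind

namespace QuantumMinor

section OrderedDeterminants

variable {α A : Type*} [Ring A] (X : α → α → α → A)

def orderedProd (L : List α) (σ τ : Perm α) : A :=
  (L.map fun m => X m (σ m) (τ m)).prod

theorem orderedProd_append_cons_cons {La Lb : List α} (c d : α) {σ τ σ' τ' : Perm α}
    (hσ : ∀ m ∈ La ++ Lb, σ' m = σ m) (hτ : ∀ m ∈ La ++ Lb, τ' m = τ m) :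
    orderedProd X (La ++ c :: d :: Lb) σ' τ' =
      orderedProd X La σ τ * (X c (σ' c) (τ' c) * X d (σ' d) (τ' d)) * orderedProd X Lb σ τ := by
  have hLa : ∀ m ∈ La, σ' m = σ m ∧ τ' m = τ m := fun m hm =>
    ⟨hσ m (List.mem_append_left _ hm), hτ m (List.mem_append_left _ hm)⟩
  have hLb : ∀ m ∈ Lb, σ' m = σ m ∧ τ' m = τ m := fun m hm =>
    ⟨hσ m (List.mem_append_right _ hm), hτ m (List.mem_append_right _ hm)⟩
  simp only [orderedProd, List.map_append, List.map_cons, List.prod_append, List.prod_cons,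
    mul_assoc]
  rw [List.map_congr_left fun m hm => by rw [(hLa m hm).1, (hLa m hm).2],
    List.map_congr_left (l := Lb) fun m hm => by rw [(hLb m hm).1, (hLb m hm).2]]

variable [Fintype α] [DecidableEq α]

def rowDet (L : List α) (τ : Perm α) : A :=
  ∑ σ : Perm α, (sign σ : ℤ) • orderedProd X L σ τ

def doubleDet (L : List α) : A :=
  ∑ σ : Perm α, ∑ τ : Perm α, (sign σ * sign τ : ℤ) • orderedProd X L σ τ

theorem rowDet_mul_swap {La Lb : List α} {a b : α} (hL : (La ++ a :: b :: Lb).Nodup)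
    (hX : ∀ x y p q,
      X a x p * X b y q + X a x q * X b y p = X a y p * X b x q + X a y q * X b x p)
    (τ : Perm α) :
    rowDet X (La ++ a :: b :: Lb) (τ * swap a b) = -rowDet X (La ++ a :: b :: Lb) τ := by
  have hab : a ≠ b := by grind [List.nodup_middle]
  have hswap := mul_swap_apply_of_mem_append hL
  have hrefl (π : Perm α) : ∀ m ∈ La ++ Lb, π m = π m := fun _ _ => rfl
  rw [eq_neg_iff_add_eq_zero, rowDet, rowDet, ← Finset.sum_add_distrib]
  refine Finset.sum_ninvolution (· * swap a b) (fun σ => ?_)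
    (fun σ _ => by simpa [swap_eq_one_iff] using hab) (fun _ => Finset.mem_univ _)
    (fun σ => mul_swap_mul_self a b σ)
  simp only [orderedProd_append_cons_cons X a b (hswap _) (hswap _),
    orderedProd_append_cons_cons X a b (hswap _) (hrefl _),
    orderedProd_append_cons_cons X a b (hrefl _) (hswap _),
    orderedProd_append_cons_cons X a b (hrefl _) (hrefl _),
    Perm.mul_apply, swap_apply_left, swap_apply_right]
  rw [← smul_add, ← smul_add, ← add_mul, ← mul_add, ← add_mul, ← mul_add, hX, Perm.sign_mul,
    sign_swap hab]
  simp

theorem rowDet_finRange_eq_sign_smul {N : ℕ} {X : Fin (N + 1) → Fin (N + 1) → Fin (N + 1) → A}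
    (hX : ∀ (i : Fin N) x y p q,
      X i.castSucc x p * X i.succ y q + X i.castSucc x q * X i.succ y p =
        X i.castSucc y p * X i.succ x q + X i.castSucc y q * X i.succ x p)
    (τ : Perm (Fin (N + 1))) :
    rowDet X (List.finRange (N + 1)) τ = (sign τ : ℤ) • rowDet X (List.finRange (N + 1)) 1 := by
  refine eq_sign_smul_of_map_mul_swap_castSucc_succ (fun τ i => ?_) τ
  obtain ⟨La, Lb, h⟩ := List.exists_finRange_eq_append_castSucc_succ i
  rw [h]
  exact rowDet_mul_swap X (h ▸ List.nodup_finRange _) (hX i) τ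

theorem doubleDet_append_swap {La Lb : List α} {a b : α} (hL : (La ++ a :: b :: Lb).Nodup)
    (hX : ∀ x y p q, ⁅X a x p, X b y q⁆ = ⁅X b x p, X a y q⁆) :
    doubleDet X (La ++ a :: b :: Lb) = doubleDet X (La ++ b :: a :: Lb) := by
  have hab : a ≠ b := by grind [List.nodup_middle]
  have hswap := mul_swap_apply_of_mem_append hL
  have hrefl (π : Perm α) : ∀ m ∈ La ++ Lb, π m = π m := fun _ _ => rfl
  rw [← sub_eq_zero, doubleDet, doubleDet, ← Fintype.sum_prod_type', ← Fintype.sum_prod_type',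
    ← Finset.sum_sub_distrib]
  refine Finset.sum_ninvolution (Prod.map (· * swap a b) (· * swap a b)) (fun ⟨σ, τ⟩ => ?_)
    (fun ⟨σ, τ⟩ _ => by simpa [swap_eq_one_iff] using hab) (fun _ => Finset.mem_univ _)
    (fun ⟨σ, τ⟩ => by simp [mul_swap_mul_self])
  simp only [Prod.map_apply, orderedProd_append_cons_cons X _ _ (hswap _) (hswap _),
    orderedProd_append_cons_cons X _ _ (hrefl _) (hrefl _),
    Perm.mul_apply, swap_apply_left, swap_apply_right]
  have hsign : ((sign (σ * swap a b) : ℤ) * sign (τ * swap a b)) = sign σ * sign τ := by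
    simp [Perm.sign_mul, sign_swap hab]
  have hcomm := hX (σ a) (σ b) (τ a) (τ b)
  rw [Ring.lie_def, Ring.lie_def] at hcomm
  rw [hsign, ← smul_sub, ← smul_sub, ← smul_add, ← sub_mul, ← mul_sub, ← sub_mul, ← mul_sub,
    ← add_mul, ← mul_add, hcomm]
  simp

theorem doubleDet_perm {L L' : List α} (h : L.Perm L') (hL : L.Nodup)
    (hX : ∀ a b x y p q, ⁅X a x p, X b y q⁆ = ⁅X b x p, X a y q⁆) :
    doubleDet X L = doubleDet X L' :=
  h.apply_eq_of_swap_adjacent (fun _ _ _ _ hnd => doubleDet_append_swap X hnd (hX _ _)) hL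

theorem doubleDet_eq_sum_sign_smul_rowDet (L : List α) :
    doubleDet X L = ∑ τ : Perm α, (sign τ : ℤ) • rowDet X L τ := by
  rw [doubleDet, Finset.sum_comm]
  simp only [rowDet, Finset.smul_sum, smul_smul, mul_comm]

theorem doubleDet_transpose (L : List α) :
    doubleDet (fun m x p => X m p x) L = doubleDet X L := by
  rw [doubleDet, Finset.sum_comm]
  simp only [doubleDet, orderedProd, mul_comm]

theorem doubleDet_comp (π : Perm α) (L : List α) :
    doubleDet (fun m => X (π m)) L = doubleDet X (L.map π) := by
  refine Fintype.sum_equiv (Equiv.mulRight π⁻¹) _ _ fun σ =>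
    Fintype.sum_equiv (Equiv.mulRight π⁻¹) _ _ fun τ => ?_
  simp only [coe_mulRight, Perm.sign_mul, orderedProd, List.map_map, Function.comp_def,
    Perm.mul_apply, Perm.coe_inv, symm_apply_apply, Perm.sign_inv]
  rw [← Units.val_mul, ← Units.val_mul, mul_mul_mul_comm, Int.units_mul_self, mul_one]

theorem doubleDet_finRange_eq_factorial_smul_rowDet {N : ℕ}
    {X : Fin (N + 1) → Fin (N + 1) → Fin (N + 1) → A}
    (hX : ∀ (i : Fin N) x y p q,
      X i.castSucc x p * X i.succ y q + X i.castSucc x q * X i.succ y p =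
        X i.castSucc y p * X i.succ x q + X i.castSucc y q * X i.succ x p) :
    doubleDet X (List.finRange (N + 1)) =
      (N + 1).factorial • rowDet X (List.finRange (N + 1)) 1 := by
  have h (τ : Perm (Fin (N + 1))) : (sign τ : ℤ) • rowDet X (List.finRange (N + 1)) τ =
      rowDet X (List.finRange (N + 1)) 1 := by
    rw [rowDet_finRange_eq_sign_smul hX, smul_smul, ← Units.val_mul, Int.units_mul_self,
      Units.val_one, one_smul]
  simp only [doubleDet_eq_sum_sign_smul_rowDet, h, Finset.sum_const, Finset.card_univ,
    Fintype.card_perm, Fintype.card_fin]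

end OrderedDeterminants

section EnvelopingAlgebra

variable {n}

local notation "𝓤" => UniversalEnvelopingAlgebra K (Matrix (Fin n) (Fin n) K)

noncomputable def E (a b : Fin n) : 𝓤 := UniversalEnvelopingAlgebra.ι K (Matrix.single a b 1)

noncomputable def shiftedE (v : K) (a b : Fin n) : 𝓤 := E K a b + if a = b then v • 1 else 0

theorem lie_E_E (a b c d : Fin n) :
    ⁅E K a b, E K c d⁆ =
      (if c = b then (1 : K) else 0) • E K a d - (if a = d then (1 : K) else 0) • E K c b := by
  have h : ⁅Matrix.single a b (1 : K), Matrix.single c d (1 : K)⁆ =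
      (if c = b then (1 : K) else 0) • Matrix.single a d (1 : K) -
        (if a = d then (1 : K) else 0) • Matrix.single c b (1 : K) := by
    rw [Ring.lie_def]
    by_cases hcb : c = b <;> by_cases had : a = d <;> simp [hcb, had, Ne.symm]
  simp only [E, ← LieHom.map_lie, h, map_sub, map_smul]

theorem shiftedE_eq_add_smul_one (v : K) (a b : Fin n) :
    shiftedE K v a b = E K a b + (v * if a = b then 1 else 0) • 1 := by
  by_cases h : a = b <;> simp [shiftedE, h]

theorem shiftedE_mul_shiftedE (u v : K) (a b c d : Fin n) :
    shiftedE K u a b * shiftedE K v c d =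
      E K a b * E K c d + (v * if c = d then 1 else 0) • E K a b +
        (u * if a = b then 1 else 0) • E K c d +
        ((u * if a = b then 1 else 0) * (v * if c = d then 1 else 0)) • 1 := by
  simp only [shiftedE_eq_add_smul_one, mul_add, add_mul, smul_mul_assoc, mul_smul_comm, mul_one,
    one_mul]
  module

theorem lie_shiftedE_shiftedE (u v : K) (a b c d : Fin n) :
    ⁅shiftedE K u a b, shiftedE K v c d⁆ = ⁅E K a b, E K c d⁆ := by
  rw [Ring.lie_def, Ring.lie_def, shiftedE_mul_shiftedE, shiftedE_mul_shiftedE]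
  module

theorem shiftedE_pair_symm_rows (α : K) (x y p q : Fin n) :
    shiftedE K α x p * shiftedE K (α - 1) y q + shiftedE K α x q * shiftedE K (α - 1) y p =
      shiftedE K α y p * shiftedE K (α - 1) x q + shiftedE K α y q * shiftedE K (α - 1) x p := by
  have h₁ := lie_E_E K y p x q
  have h₂ := lie_E_E K y q x p
  rw [Ring.lie_def] at h₁ h₂
  simp only [shiftedE_mul_shiftedE]
  linear_combination (norm := module) -(h₁ + h₂)

theorem shiftedE_pair_symm_cols (α : K) (p q w z : Fin n) :
    shiftedE K α p w * shiftedE K (α + 1) q z + shiftedE K α q w * shiftedE K (α + 1) p z =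
      shiftedE K α p z * shiftedE K (α + 1) q w + shiftedE K α q z * shiftedE K (α + 1) p w := by
  have h₁ := lie_E_E K p z q w
  have h₂ := lie_E_E K q z p w
  rw [Ring.lie_def] at h₁ h₂
  simp only [shiftedE_mul_shiftedE]
  linear_combination (norm := module) -(h₁ + h₂)

end EnvelopingAlgebra

section QuantumMinors

variable {n k}

local notation "𝓤" => UniversalEnvelopingAlgebra K (Matrix (Fin n) (Fin n) K)

noncomputable def shiftedEntries {α : Type*} (v : α → K) (I J : α → Fin n) : α → α → α → 𝓤 :=
  fun m x p => shiftedE K (v m) (I x) (J p)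

theorem lie_shiftedEntries {α : Type*} (v : α → K) (I J : α → Fin n) (a b x y p q : α) :
    ⁅shiftedEntries K v I J a x p, shiftedEntries K v I J b y q⁆ =
      ⁅shiftedEntries K v I J b x p, shiftedEntries K v I J a y q⁆ := by
  simp only [shiftedEntries, lie_shiftedE_shiftedE]

theorem factorial_smul_qMinorRow (I J : Fin (k + 1) → Fin n) :
    (k + 1).factorial • qMinorRow K n k I J =
      doubleDet (shiftedEntries K (fun m : Fin (k + 1) => ((m : ℕ) : K)) I J)
        ((List.finRange (k + 1)).map Fin.revPerm) := by
  rw [← doubleDet_comp]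
  have hrev (m : Fin (k + 1)) : (((Fin.revPerm m : Fin (k + 1)) : ℕ) : K) = k - (m : ℕ) := by
    rw [Fin.revPerm_apply, Fin.val_rev, Nat.cast_sub (by omega)]
    push_cast
    ring
  rw [doubleDet_finRange_eq_factorial_smul_rowDet]
  · simp only [qMinorRow, rowDet, orderedProd, shiftedEntries, shiftedE, E, hrev,
      List.ofFn_eq_map, Perm.one_apply]
  · intro i x y p q
    simp only [shiftedEntries, hrev, Fin.val_succ, Fin.val_castSucc, Nat.cast_succ,
      sub_add_eq_sub_sub]
    exact shiftedE_pair_symm_rows K _ _ _ _ _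

theorem factorial_smul_qMinorCol (I J : Fin (k + 1) → Fin n) :
    (k + 1).factorial • qMinorCol K n k I J =
      doubleDet (shiftedEntries K (fun m : Fin (k + 1) => ((m : ℕ) : K)) I J)
        (List.finRange (k + 1)) := by
  rw [← doubleDet_transpose, doubleDet_finRange_eq_factorial_smul_rowDet]
  · simp only [qMinorCol, rowDet, orderedProd, shiftedEntries, shiftedE, E,
      List.ofFn_eq_map, Perm.one_apply]
    rfl
  · intro i x y p q
    simp only [shiftedEntries, Fin.val_succ, Fin.val_castSucc, Nat.cast_succ]
    exact shiftedE_pair_symm_cols K _ _ _ _ _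

end QuantumMinors

end QuantumMinor

theorem qMinorRow_eq_qMinorCol [CharZero K] (I J : Fin (k + 1) → Fin n) :
    qMinorRow K n k I J = qMinorCol K n k I J := by
  have hfac : ((k + 1).factorial : K) ≠ 0 := Nat.cast_ne_zero.2 (Nat.factorial_ne_zero _)
  refine smul_right_injective _ hfac ?_
  simp only [Nat.cast_smul_eq_nsmul, QuantumMinor.factorial_smul_qMinorRow,
    QuantumMinor.factorial_smul_qMinorCol]
  exact QuantumMinor.doubleDet_perm _ Fin.revPerm.map_finRange_perm
    ((List.nodup_finRange _).map Fin.revPerm.injective) (QuantumMinor.lie_shiftedEntries K _ I J)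
end

section
/- Let K be a field and n, k positive integers. For a matrix A ∈ Matrix (Fin n) (Fin n) K, one has A·A = 0 and rank A ≤ k if and only if there exist matrices X, Y ∈ Matrix (Fin n) (Fin k) K with Yᵗ·X = 0 and A = X·Yᵗ. In other words, {A : A² = 0 and rank A ≤ k} = {X·Yᵗ : X, Y ∈ Matrix (Fin n) (Fin k) K, Yᵗ·X = 0}. -/
open Matrix
/-- A square matrix `A` satisfies `A² = 0` and `rank A ≤ k` iff it can be
written `A = X·Yᵀ` with `Yᵀ·X = 0` for some `n × k` matrices `X, Y`; i.e. the closure of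
the small nilpotent orbit of rank `k` in `gl_n` is the Kraft–Procesi image `r(l⁻¹(0))`. -/
theorem small_orbit_closure_eq_KP_image
    (K : Type*) [Field K] (n k : ℕ) (hn : 0 < n) (hk : 0 < k)
    (A : Matrix (Fin n) (Fin n) K) :
    (A * A = 0 ∧ A.rank ≤ k) ↔
      ∃ X Y : Matrix (Fin n) (Fin k) K, Yᵀ * X = 0 ∧ A = X * Yᵀ := by
  constructor
  · rintro ⟨hA2, hrk⟩
    set f : (Fin n → K) →ₗ[K] (Fin n → K) := A.mulVecLin with hf
    set S := LinearMap.range f with hSdef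
    have hr : Module.finrank K S ≤ k := hrk
    have hSk : S ≤ LinearMap.ker f := by
      rintro x ⟨y, rfl⟩
      simp only [LinearMap.mem_ker, hf]
      have : (A * A).mulVecLin y = 0 := by rw [hA2]; simp
      simpa [Matrix.mulVecLin_mul] using this
    let b := Module.finBasis K S
    let ι : (Fin (Module.finrank K S) → K) →ₗ[K] (Fin k → K) :=
      Function.ExtendByZero.linearMap K (Fin.castLE hr)
    let g : (Fin n → K) →ₗ[K] (Fin k → K) :=
      ι ∘ₗ b.equivFun.toLinearMap ∘ₗ f.rangeRestrict
    let h : (Fin k → K) →ₗ[K] (Fin n → K) :=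
      S.subtype ∘ₗ b.equivFun.symm.toLinearMap ∘ₗ
        LinearMap.funLeft K K (Fin.castLE hr)
    have hhg : h ∘ₗ g = f := by
      apply LinearMap.ext; intro x
      have hext : (Function.extend (Fin.castLE hr)
          (b.equivFun (f.rangeRestrict x)) 0) ∘ (Fin.castLE hr)
          = b.equivFun (f.rangeRestrict x) := by
        funext i
        exact (Fin.castLE_injective hr).extend_apply _ _ _
      simp only [h, g, ι, LinearMap.comp_apply, Function.ExtendByZero.linearMap_apply,
        LinearMap.funLeft_apply]
      show S.subtype (b.equivFun.symm ((Function.extend (Fin.castLE hr)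
          (b.equivFun (f.rangeRestrict x)) 0) ∘ (Fin.castLE hr))) = f x
      rw [hext, b.equivFun.symm_apply_apply]
      rfl
    have hgh : g ∘ₗ h = 0 := by
      apply LinearMap.ext; intro w
      have hmem : h w ∈ S := by
        simp only [h, LinearMap.comp_apply]
        exact (b.equivFun.symm _ : S).2
      have hker : f (h w) = 0 := hSk hmem
      have : f.rangeRestrict (h w) = 0 := by
        apply Subtype.ext
        simpa using hker
      simp only [g, LinearMap.comp_apply, this, map_zero, LinearMap.zero_apply]
    refine ⟨LinearMap.toMatrix' h, (LinearMap.toMatrix' g)ᵀ, ?_, ?_⟩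
    · rw [transpose_transpose, ← LinearMap.toMatrix'_comp, hgh]
      exact LinearEquiv.map_zero _
    · rw [transpose_transpose, ← LinearMap.toMatrix'_comp, hhg]
      rw [show f = Matrix.toLin' A from (Matrix.toLin'_apply' A).symm,
        LinearMap.toMatrix'_toLin']
  · rintro ⟨X, Y, hYX, rfl⟩
    constructor
    · have : X * Yᵀ * (X * Yᵀ) = X * (Yᵀ * X) * Yᵀ := by
        rw [Matrix.mul_assoc, Matrix.mul_assoc, Matrix.mul_assoc]
      rw [this, hYX, Matrix.mul_zero, Matrix.zero_mul]
    · calc (X * Yᵀ).rank ≤ X.rank := Matrix.rank_mul_le_left X Yᵀ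
        _ ≤ Fintype.card (Fin k) := X.rank_le_card_width
        _ = k := Fintype.card_fin k
end

section
/- Let K be a field of characteristic zero and n, k positive integers. Let V ⊆ U(gl_n) be the K-linear span of all quantum minors 𝐄_{IJ} of order k+1, over all sequences I, J : Fin (k+1) → Fin n. Then V is invariant under the adjoint action of gl_n: for every A ∈ gl_n and every v ∈ V, the commutator ⁅ι(A), v⁆ = ι(A)·v − v·ι(A) lies in V. -/
variable (K : Type*) [Field K] (n k : ℕ)

attribute [local instance 100] LieRing.ofAssociativeRing

/-- The quantum minor `𝐄_{IJ}` of order `k+1` in `U(gl_n)`: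
`Σ_σ sgn(σ) ∏_{m=0}^{k} (ι(E_{I(m),J(σ(m))}) + m·δ_{I(m),J(σ(m))}·1)`,
the product ordered with `m` increasing. -/
noncomputable def qMinor (I J : Fin (k + 1) → Fin n) :
    UniversalEnvelopingAlgebra K (Matrix (Fin n) (Fin n) K) :=
  ∑ σ : Equiv.Perm (Fin (k + 1)),
    (Equiv.Perm.sign σ : ℤ) •
      (List.ofFn fun m : Fin (k + 1) =>
        UniversalEnvelopingAlgebra.ι K (Matrix.single (I m) (J (σ m)) (1 : K))
          + (if I m = J (σ m) then (((m : ℕ) : K)) •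
              (1 : UniversalEnvelopingAlgebra K (Matrix (Fin n) (Fin n) K)) else 0)).prod

/-!
`ad x = ⁅x, ·⁆` is a derivation of `U(gl_n)`, so on each ordered product in a quantum minor it acts
one factor at a time. The shifts `m • 1` are central and `⁅E_ab, E_cd⁆ = δ_bc E_ad - δ_da E_cb`, so
`ad E_ab` turns the `m`-th factor into the `m`-th factor with row `I m = b` replaced by `a`, minus
the one with column `J (σ m) = a` replaced by `b`; the shifts these new factors carry cancel.
Summing over `σ` (reindexing the columns by `σ`) gives
`⁅E_ab, 𝐄_IJ⁆ = ∑_{I m = b} 𝐄_{I[m ↦ a], J} - ∑_{J l = a} 𝐄_{I, J[l ↦ b]}`,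
and the `E_ab` span `gl_n`.
-/

open Function

section LeibnizRule

variable {R : Type*} [Ring R]

theorem List.ofFn_update {α : Type*} {N : ℕ} (f : Fin N → α) (m : Fin N) (y : α) :
    List.ofFn (update f m y) = (List.ofFn f).set m y := by
  refine List.ext_getElem (by simp) fun i _ _ => ?_
  simp [List.getElem_set, update_apply, Fin.ext_iff, eq_comm]

theorem prod_ofFn_update {N : ℕ} (f : Fin N → R) (m : Fin N) (y : R) :
    (List.ofFn (update f m y)).prod
      = ((List.ofFn f).take m).prod * y * ((List.ofFn f).drop (m + 1)).prod := by
  simp [List.ofFn_update, List.prod_set]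

theorem prod_ofFn_update_sub {N : ℕ} (f : Fin N → R) (m : Fin N) (y z : R) :
    (List.ofFn (update f m (y - z))).prod
      = (List.ofFn (update f m y)).prod - (List.ofFn (update f m z)).prod := by
  simp only [prod_ofFn_update, mul_sub, sub_mul]

theorem prod_ofFn_update_zero {N : ℕ} (f : Fin N → R) (m : Fin N) :
    (List.ofFn (update f m 0)).prod = 0 := by
  simp [prod_ofFn_update]

theorem lie_prod_ofFn (x : R) {N : ℕ} (f : Fin N → R) :
    ⁅x, (List.ofFn f).prod⁆ = ∑ m, (List.ofFn (update f m ⁅x, f m⁆)).prod := by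
  induction N with
  | zero => simp [Ring.lie_def]
  | succ N ih =>
    have update_zero (y : R) :
        List.ofFn (update f 0 y) = y :: List.ofFn fun i : Fin N => f i.succ := by
      rw [List.ofFn_succ, update_self]
      simp only [update_of_ne (Fin.succ_ne_zero _)]
    have update_succ (m : Fin N) (y : R) : List.ofFn (update f m.succ y)
        = f 0 :: List.ofFn (update (fun i : Fin N => f i.succ) m y) := by
      rw [List.ofFn_succ, update_of_ne (Fin.succ_ne_zero m).symm,
        ← update_comp_eq_of_injective' f (Fin.succ_injective N) m y]
    rw [List.ofFn_succ, List.prod_cons, Fin.sum_univ_succ, update_zero, List.prod_cons]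
    simp only [update_succ, List.prod_cons]
    rw [← Finset.mul_sum, ← ih]
    simp only [Ring.lie_def]
    noncomm_ring

end LeibnizRule

namespace Matrix

variable {ι α : Type*} [Fintype ι] [DecidableEq ι] [Ring α]

theorem single_mul_single (a b c d : ι) (r s : α) :
    single a b r * single c d s = if b = c then single a d (r * s) else 0 := by
  split_ifs with h
  · rw [h, single_mul_single_same]
  · exact single_mul_single_of_ne _ a b c h s

theorem lie_single_single (a b c d : ι) (r s : α) :
    ⁅single a b r, single c d s⁆
      = (if b = c then single a d (r * s) else 0) - if d = a then single c b (s * r) else 0 := by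
  rw [Ring.lie_def, single_mul_single, single_mul_single]

theorem apply_eq_sum_smul_apply_single {ι' R M F : Type*} [Fintype ι'] [DecidableEq ι']
    [Semiring R] [AddCommMonoid M] [Module R M] [FunLike F (Matrix ι ι' R) M]
    [LinearMapClass F R _ M]
    (f : F) (A : Matrix ι ι' R) : f A = ∑ i, ∑ j, A i j • f (single i j 1) := by
  conv_lhs => rw [matrix_eq_sum_single A]
  simp only [map_sum, ← map_smul, smul_single, smul_eq_mul, mul_one]

end Matrix

section QuantumMinor

open UniversalEnvelopingAlgebra Matrix

variable {n k}

local notation "U" => UniversalEnvelopingAlgebra K (Matrix (Fin n) (Fin n) K)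

noncomputable def qMinorFactor (I J : Fin (k + 1) → Fin n) (σ : Equiv.Perm (Fin (k + 1)))
    (m : Fin (k + 1)) : U :=
  ι K (single (I m) (J (σ m)) (1 : K)) + if I m = J (σ m) then ((m : ℕ) : K) • (1 : U) else 0

theorem qMinor_eq_sum_sign_smul_prod (I J : Fin (k + 1) → Fin n) :
    qMinor K n k I J
      = ∑ σ, (Equiv.Perm.sign σ : ℤ) • (List.ofFn (qMinorFactor K I J σ)).prod :=
  rfl

theorem lie_ι_single_qMinorFactor (a b : Fin n) (I J : Fin (k + 1) → Fin n)
    (σ : Equiv.Perm (Fin (k + 1))) (m : Fin (k + 1)) :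
    ⁅ι K (single a b (1 : K)), qMinorFactor K I J σ m⁆
      = (if I m = b then qMinorFactor K (update I m a) J σ m else 0)
        - if J (σ m) = a then qMinorFactor K I (update J (σ m) b) σ m else 0 := by
  have shift_central : ⁅ι K (single a b (1 : K)), qMinorFactor K I J σ m⁆
      = ι K ⁅single a b (1 : K), single (I m) (J (σ m)) 1⁆ := by
    rw [LieHom.map_lie, qMinorFactor, lie_add]
    split_ifs <;> simp [Ring.lie_def]
  rw [shift_central, lie_single_single]
  simp only [qMinorFactor, update_self]
  generalize I m = c, J (σ m) = d
  rcases eq_or_ne c b with rfl | hcb <;> rcases eq_or_ne d a with rfl | hda <;>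
    simp [*, Ne.symm]

theorem lie_ι_single_prod_qMinorFactor (a b : Fin n) (I J : Fin (k + 1) → Fin n)
    (σ : Equiv.Perm (Fin (k + 1))) :
    ⁅ι K (single a b (1 : K)), (List.ofFn (qMinorFactor K I J σ)).prod⁆
      = ∑ m, ((if I m = b then (List.ofFn (qMinorFactor K (update I m a) J σ)).prod else 0)
          - if J (σ m) = a then (List.ofFn (qMinorFactor K I (update J (σ m) b) σ)).prod
            else 0) := by
  refine (lie_prod_ofFn _ _).trans (Finset.sum_congr rfl fun m _ => ?_)
  have update_left : update (qMinorFactor K I J σ) m (qMinorFactor K (update I m a) J σ m)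
      = qMinorFactor K (update I m a) J σ :=
    update_eq_iff.2 ⟨rfl, fun i hi => by simp only [qMinorFactor, update_of_ne hi]⟩
  have update_right : update (qMinorFactor K I J σ) m (qMinorFactor K I (update J (σ m) b) σ m)
      = qMinorFactor K I (update J (σ m) b) σ :=
    update_eq_iff.2 ⟨rfl, fun i hi => by
      simp only [qMinorFactor, update_of_ne (σ.injective.ne hi)]⟩
  rw [lie_ι_single_qMinorFactor, prod_ofFn_update_sub]
  congr 1 <;> split_ifs <;> simp only [prod_ofFn_update_zero, update_left, update_right]

theorem lie_ι_single_qMinor (a b : Fin n) (I J : Fin (k + 1) → Fin n) :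
    ⁅ι K (single a b (1 : K)), qMinor K n k I J⁆
      = (∑ m, if I m = b then qMinor K n k (update I m a) J else 0)
        - ∑ l, if J l = a then qMinor K n k I (update J l b) else 0 := by
  simp only [qMinor_eq_sum_sign_smul_prod, lie_sum, lie_zsmul, lie_ι_single_prod_qMinorFactor,
    Finset.smul_sum, smul_sub, smul_ite, smul_zero, Finset.sum_sub_distrib]
  congr 1
  · rw [Finset.sum_comm]
    simp only [Finset.sum_ite_irrel, Finset.sum_const_zero]
  · refine (Finset.sum_congr rfl fun σ _ => Equiv.sum_comp σ fun l =>
      if J l = a then (Equiv.Perm.sign σ : ℤ) • (List.ofFn (qMinorFactor K I (update J l b) σ)).prod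
      else 0).trans ?_
    rw [Finset.sum_comm]
    simp only [Finset.sum_ite_irrel, Finset.sum_const_zero]

theorem lie_ι_single_qMinor_mem_span (a b : Fin n) (I J : Fin (k + 1) → Fin n) :
    ⁅ι K (single a b (1 : K)), qMinor K n k I J⁆
      ∈ Submodule.span K {u | ∃ I J : Fin (k + 1) → Fin n, u = qMinor K n k I J} := by
  rw [lie_ι_single_qMinor]
  refine sub_mem (sum_mem fun m _ => ?_) (sum_mem fun l _ => ?_) <;> split_ifs <;>
    first
    | exact Submodule.subset_span ⟨_, _, rfl⟩
    | exact zero_mem _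

end QuantumMinor

theorem qMinor_span_ad_invariant
    (A : Matrix (Fin n) (Fin n) K)
    (v : UniversalEnvelopingAlgebra K (Matrix (Fin n) (Fin n) K))
    (hv : v ∈ Submodule.span K
      {u | ∃ I J : Fin (k + 1) → Fin n, u = qMinor K n k I J}) :
    ⁅UniversalEnvelopingAlgebra.ι K A, v⁆ ∈ Submodule.span K
      {u | ∃ I J : Fin (k + 1) → Fin n, u = qMinor K n k I J} := by
  set S := Submodule.span K {u | ∃ I J : Fin (k + 1) → Fin n, u = qMinor K n k I J}
  have ad_mem : S ≤ S.comap (LieAlgebra.ad K _ (UniversalEnvelopingAlgebra.ι K A)) := by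
    refine Submodule.span_le.2 fun u ⟨I, J, hu⟩ => ?_
    rw [SetLike.mem_coe, Submodule.mem_comap, LieAlgebra.ad_apply, hu,
      Matrix.apply_eq_sum_smul_apply_single]
    simp only [sum_lie, smul_lie]
    exact sum_mem fun i _ => sum_mem fun j _ =>
      Submodule.smul_mem _ _ (lie_ι_single_qMinor_mem_span K i j I J)
  exact ad_mem hv
end
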